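/- arXiv:0902.3643 — 10 statements merged into one kernel-verified Lean document; each statement's English description precedes it below -/
import Mathlib

section
/- Let ε = (ε₁, ε₂) be real numbers with ε₂ > 0 and ε₁ + ε₂ < -1, and let v = (v₁, v₂) ∈ ℝ². Set u₁ = v₁ + iε₁ and u₂ = v₂ + iε₂. Then the Fourier transform of the spread option payoff along the shifted contour equals the gamma-function expression: ∫_{ℝ²} e^{-i(u₁x₁ + u₂x₂)} · (e^{x₁} - e^{x₂} - 1)^+ dx₁ dx₂ = Γ(i(u₁+u₂)-1)·Γ(-iu₂)/Γ(iu₁+1). -/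
/-!
The shear `x₁ = s + log (1 + e^{x₂})` preserves Lebesgue measure on `ℝ²`, and since
`e^{x₁} - e^{x₂} - 1 = (1 + e^{x₂}) (e^s - 1)` it splits the integrand into a product
`(e^{-zs} (e^s - 1)⁺) · (σ(x₂)^a σ(-x₂)^b)`, where `z = iu₁`, `a = -iu₂`, `b = i(u₁+u₂) - 1`
(so `a + b = z - 1`) and `σ` is the logistic function. The first factor integrates to
`1 / (z (z - 1))`; the substitution `t = σ(x₂)` turns the second into the Beta integral
`Γ(a) Γ(b) / Γ(z - 1)`, and `Γ(z + 1) = z (z - 1) Γ(z - 1)`. Both changes of variables and the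
factorisation `∫∫ f(s) g(y) = ∫ f · ∫ g` hold without integrability hypotheses.
-/

open MeasureTheory Set Real Complex

section Shear

variable {G β E : Type*} [MeasurableSpace G] [AddGroup G] [MeasurableAdd₂ G] [MeasurableSpace β]
  [NormedAddCommGroup E] [NormedSpace ℝ E]
  {μ : Measure G} [SFinite μ] [μ.IsAddRightInvariant] {ν : Measure β} [SFinite ν]

theorem measurePreserving_fst_add_comp_snd {φ : β → G} (hφ : Measurable φ) :
    MeasurePreserving (fun p : G × β => (p.1 + φ p.2, p.2)) (μ.prod ν) (μ.prod ν) :=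
  have hskew : MeasurePreserving (fun q : β × G => (q.1, q.2 + φ q.1)) (ν.prod μ) (ν.prod μ) :=
    (MeasurePreserving.id ν).skew_product (measurable_snd.add (hφ.comp measurable_fst))
      (ae_of_all _ fun b => map_add_right_eq_self μ (φ b))
  (Measure.measurePreserving_swap.comp hskew).comp Measure.measurePreserving_swap

theorem integral_comp_fst_add_comp_snd {φ : β → G} (hφ : Measurable φ) {f : G × β → E}
    (hf : AEStronglyMeasurable f (μ.prod ν)) :
    ∫ p, f (p.1 + φ p.2, p.2) ∂(μ.prod ν) = ∫ p, f p ∂(μ.prod ν) := by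
  have h := measurePreserving_fst_add_comp_snd (μ := μ) (ν := ν) hφ
  rw [← integral_map h.aemeasurable (by rwa [h.map_eq]), h.map_eq]

end Shear

theorem integral_cexp_neg_mul_mul_max_exp_sub_one {z : ℂ} (hz : 1 < z.re) :
    ∫ s : ℝ, cexp (-z * s) * ((max (rexp s - 1) 0 : ℝ) : ℂ) = 1 / (z * (z - 1)) := by
  have h₁ : (1 - z).re < 0 := by rw [sub_re, one_re]; linarith
  have h₀ : (-z).re < 0 := by rw [neg_re]; linarith
  have hz₀ : z ≠ 0 := by rintro rfl; rw [zero_re] at hz; linarith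
  have hz₁ : z - 1 ≠ 0 := by rw [sub_ne_zero]; rintro rfl; rw [one_re] at hz; exact lt_irrefl _ hz
  have hz₁' : 1 - z ≠ 0 := by rw [← neg_sub]; exact neg_ne_zero.mpr hz₁
  have hvanish : ∀ s ∉ Ioi (0 : ℝ), cexp (-z * s) * ((max (rexp s - 1) 0 : ℝ) : ℂ) = 0 :=
    fun s hs => by
      rw [max_eq_right (by simpa using (not_lt.mp hs))]
      simp
  have hpos : ∀ s ∈ Ioi (0 : ℝ), cexp (-z * s) * ((max (rexp s - 1) 0 : ℝ) : ℂ) =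
      cexp ((1 - z) * s) - cexp (-z * s) := fun s hs => by
    rw [max_eq_left (by simpa using (mem_Ioi.mp hs).le)]
    push_cast
    rw [mul_sub_one, ← Complex.exp_add]
    congr 2
    ring
  rw [← setIntegral_eq_integral_of_forall_compl_eq_zero hvanish,
    setIntegral_congr_fun measurableSet_Ioi hpos,
    integral_sub (integrableOn_exp_mul_complex_Ioi h₁ 0) (integrableOn_exp_mul_complex_Ioi h₀ 0),
    integral_exp_mul_complex_Ioi h₁, integral_exp_mul_complex_Ioi h₀]
  simp only [ofReal_zero, mul_zero, Complex.exp_zero]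
  field_simp
  ring

theorem ofReal_cpow_eq_cexp_log_mul {x : ℝ} (hx : 0 < x) (w : ℂ) :
    (x : ℂ) ^ w = cexp (Real.log x * w) := by
  rw [cpow_def_of_ne_zero (ofReal_ne_zero.mpr hx.ne'), ofReal_log hx.le]

theorem sigmoid_cpow_mul_sigmoid_neg_cpow (a b : ℂ) (t : ℝ) :
    (sigmoid t : ℂ) ^ a * (sigmoid (-t) : ℂ) ^ b =
      cexp (a * t - (a + b) * Real.log (1 + rexp t)) := by
  have hlog_neg : Real.log (sigmoid (-t)) = -Real.log (1 + rexp t) := by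
    rw [sigmoid_def, neg_neg, Real.log_inv]
  have hlog : Real.log (sigmoid t) = t - Real.log (1 + rexp t) := by
    have h := congrArg Real.log (sigmoid_mul_rexp_neg t)
    rw [Real.log_mul (sigmoid_pos t).ne' (exp_pos _).ne', Real.log_exp, hlog_neg] at h
    linarith
  rw [ofReal_cpow_eq_cexp_log_mul (sigmoid_pos t), ofReal_cpow_eq_cexp_log_mul (sigmoid_pos _),
    ← Complex.exp_add, hlog, hlog_neg]
  push_cast
  congr 1
  ring

theorem integral_sigmoid_cpow_mul_sigmoid_neg_cpow {a b : ℂ} (ha : 0 < a.re) (hb : 0 < b.re) :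
    ∫ t : ℝ, (sigmoid t : ℂ) ^ a * (sigmoid (-t) : ℂ) ^ b = Gamma a * Gamma b / Gamma (a + b) := by
  rw [Gamma_mul_Gamma_eq_betaIntegral ha hb, mul_div_cancel_left₀ _
      (Gamma_ne_zero_of_re_pos (by rw [add_re]; positivity)), betaIntegral,
    intervalIntegral.integral_of_le zero_le_one, integral_Ioc_eq_integral_Ioo, ← range_sigmoid,
    ← image_univ, integral_image_eq_integral_abs_deriv_smul MeasurableSet.univ
      (fun t _ => (hasDerivAt_sigmoid t).hasDerivWithinAt) sigmoid_injective.injOn,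
    setIntegral_univ]
  congr 1
  ext t
  have hσ := sigmoid_pos t
  have hσ' : 0 < 1 - sigmoid t := sub_pos.mpr (sigmoid_lt_one t)
  have hσ₀ : (sigmoid t : ℂ) ≠ 0 := ofReal_ne_zero.mpr hσ.ne'
  have hσ₁ : (1 - sigmoid t : ℂ) ≠ 0 := by exact_mod_cast hσ'.ne'
  rw [sigmoid_neg, abs_of_pos (mul_pos hσ hσ'), Complex.real_smul]
  push_cast
  rw [cpow_sub _ _ hσ₀, cpow_sub _ _ hσ₁, cpow_one, cpow_one]
  field_simp

theorem max_exp_add_log_sub {c : ℝ} (hc : 0 < c) (s : ℝ) :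
    max (rexp (s + Real.log c) - c) 0 = c * max (rexp s - 1) 0 := by
  rw [Real.exp_add, Real.exp_log hc, mul_max_of_nonneg _ _ hc.le, mul_sub_one, mul_zero, mul_comm]

theorem Gamma_add_one_eq_mul_mul_Gamma_sub_one {z : ℂ} (hz₀ : z ≠ 0) (hz₁ : z - 1 ≠ 0) :
    Gamma (z + 1) = z * (z - 1) * Gamma (z - 1) := by
  rw [Gamma_add_one z hz₀, mul_assoc, ← Gamma_add_one _ hz₁, sub_add_cancel]

theorem spread_integrand_comp_shear (u₁ u₂ : ℂ) (s y : ℝ) :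
    cexp (-I * (u₁ * ↑(s + Real.log (1 + rexp y)) + u₂ * y)) *
        ((max (rexp (s + Real.log (1 + rexp y)) - rexp y - 1) 0 : ℝ) : ℂ) =
      cexp (-(I * u₁) * s) * ((max (rexp s - 1) 0 : ℝ) : ℂ) *
        ((sigmoid y : ℂ) ^ (-I * u₂) * (sigmoid (-y) : ℂ) ^ (I * (u₁ + u₂) - 1)) := by
  have hc : ((1 + rexp y : ℝ) : ℂ) = cexp (Real.log (1 + rexp y)) := by
    rw [← ofReal_exp, Real.exp_log (by positivity)]
  have hexp : cexp (-I * (u₁ * ↑(s + Real.log (1 + rexp y)) + u₂ * y)) *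
        cexp (Real.log (1 + rexp y)) =
      cexp (-(I * u₁) * s) *
        cexp (-I * u₂ * y - (-I * u₂ + (I * (u₁ + u₂) - 1)) * Real.log (1 + rexp y)) := by
    rw [← Complex.exp_add, ← Complex.exp_add]
    push_cast
    congr 1
    ring
  rw [sigmoid_cpow_mul_sigmoid_neg_cpow, sub_sub, add_comm (rexp y),
    max_exp_add_log_sub (by positivity), ofReal_mul, hc]
  linear_combination ((max (rexp s - 1) 0 : ℝ) : ℂ) * hexp

/-- The Fourier transform of the spread option payoff `(e^{x₁} - e^{x₂} - 1)⁺` along the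
shifted contour `u = v + iε` (with ε₂ > 0, ε₁ + ε₂ < -1) equals
`Γ(i(u₁+u₂)-1)·Γ(-iu₂)/Γ(iu₁+1)`. -/
theorem spread_payoff_fourier_transform
    (ε₁ ε₂ : ℝ) (hε₂ : 0 < ε₂) (hε : ε₁ + ε₂ < -1) (v₁ v₂ : ℝ) :
    (∫ x : ℝ × ℝ,
        Complex.exp (-Complex.I *
            (((v₁ : ℂ) + Complex.I * (ε₁ : ℂ)) * (x.1 : ℂ) +
              ((v₂ : ℂ) + Complex.I * (ε₂ : ℂ)) * (x.2 : ℂ))) *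
          ((max (Real.exp x.1 - Real.exp x.2 - 1) 0 : ℝ) : ℂ)) =
      Complex.Gamma
          (Complex.I *
              (((v₁ : ℂ) + Complex.I * (ε₁ : ℂ)) + ((v₂ : ℂ) + Complex.I * (ε₂ : ℂ))) - 1) *
        Complex.Gamma (-Complex.I * ((v₂ : ℂ) + Complex.I * (ε₂ : ℂ))) /
        Complex.Gamma (Complex.I * ((v₁ : ℂ) + Complex.I * (ε₁ : ℂ)) + 1) := by
  set u₁ : ℂ := v₁ + I * ε₁
  set u₂ : ℂ := v₂ + I * ε₂
  have hre₁ : (I * u₁).re = -ε₁ := by simp [u₁]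
  have hre₂ : (-I * u₂).re = ε₂ := by simp [u₂]
  have hz : 1 < (I * u₁).re := by linarith
  have ha : 0 < (-I * u₂).re := by linarith
  have hb : 0 < (I * (u₁ + u₂) - 1).re := by
    rw [show I * (u₁ + u₂) - 1 = I * u₁ - 1 - -I * u₂ by ring, sub_re, sub_re, one_re, hre₁, hre₂]
    linarith
  have hz₀ : I * u₁ ≠ 0 := fun h => by rw [h, zero_re] at hz; linarith
  have hz₁ : I * u₁ - 1 ≠ 0 := fun h => by
    rw [sub_eq_zero.mp h, one_re] at hz; exact lt_irrefl _ hz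
  have hcont : Continuous fun x : ℝ × ℝ => cexp (-I * (u₁ * x.1 + u₂ * x.2)) *
      ((max (rexp x.1 - rexp x.2 - 1) 0 : ℝ) : ℂ) := by fun_prop
  have hL : Measurable fun y : ℝ => Real.log (1 + rexp y) := by fun_prop
  rw [Measure.volume_eq_prod, ← integral_comp_fst_add_comp_snd hL hcont.aestronglyMeasurable]
  simp only [spread_integrand_comp_shear]
  rw [integral_prod_mul (fun s : ℝ => cexp (-(I * u₁) * s) * ((max (rexp s - 1) 0 : ℝ) : ℂ))
      (fun y : ℝ => (sigmoid y : ℂ) ^ (-I * u₂) * (sigmoid (-y) : ℂ) ^ (I * (u₁ + u₂) - 1)),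
    integral_cexp_neg_mul_mul_max_exp_sub_one hz, integral_sigmoid_cpow_mul_sigmoid_neg_cpow ha hb,
    show -I * u₂ + (I * (u₁ + u₂) - 1) = I * u₁ - 1 by ring,
    Gamma_add_one_eq_mul_mul_Gamma_sub_one hz₀ hz₁]
  have hΓ := Gamma_ne_zero_of_re_pos (s := I * u₁ - 1) (by rw [sub_re, one_re]; linarith)
  field_simp
end

section
/- Let ε = (ε₁, ε₂) be real numbers with ε₂ > 0 and ε₁ + ε₂ < -1. Then the function x = (x₁,x₂) ↦ e^{ε₁x₁ + ε₂x₂} · (e^{x₁} - e^{x₂} - 1)^+ is integrable on ℝ² (belongs to L¹(ℝ²)). -/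
/-!
On the support of the payoff we have `0 < x₁` and `x₂ < x₁`, and there the payoff is at most
`e^{x₁}`. So it suffices that `e^{a x₁ + b x₂}` is integrable on the cone `0 < x₁, x₂ < x₁`
when `b > 0` and `a + b < 0`. Choosing `b < s < -a`, on the cone this exponential is dominated
by the product `e^{(a + s) x₁} · min (e^{b x₂}, e^{(b - s) x₂})` of two integrable functions
of one variable.
-/

open MeasureTheory Set Real

lemma integrable_min_exp_mul {b c : ℝ} (hb : 0 < b) (hc : c < 0) :
    Integrable (fun y : ℝ => min (exp (b * y)) (exp (c * y))) := by
  have hmeas : AEStronglyMeasurable (fun y : ℝ => min (exp (b * y)) (exp (c * y))) :=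
    (by fun_prop : Continuous fun y : ℝ => min (exp (b * y)) (exp (c * y))).aestronglyMeasurable
  have hnorm (y : ℝ) : ‖min (exp (b * y)) (exp (c * y))‖ = min (exp (b * y)) (exp (c * y)) :=
    norm_of_nonneg (le_min (exp_pos _).le (exp_pos _).le)
  rw [← integrableOn_univ, ← Iic_union_Ioi (a := (0 : ℝ)), integrableOn_union]
  constructor
  · refine (integrableOn_exp_mul_Iic hb 0).mono' hmeas.restrict (ae_of_all _ fun y => ?_)
    exact (hnorm y).trans_le (min_le_left _ _)
  · refine (integrableOn_exp_mul_Ioi hc 0).mono' hmeas.restrict (ae_of_all _ fun y => ?_)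
    exact (hnorm y).trans_le (min_le_right _ _)

lemma measurableSet_cone : MeasurableSet {x : ℝ × ℝ | 0 < x.1 ∧ x.2 < x.1} :=
  (measurableSet_lt measurable_const measurable_fst).inter
    (measurableSet_lt measurable_snd measurable_fst)

lemma integrableOn_exp_mul_add_mul_cone {a b : ℝ} (hb : 0 < b) (hab : a + b < 0) :
    IntegrableOn (fun x : ℝ × ℝ => exp (a * x.1 + b * x.2)) {x | 0 < x.1 ∧ x.2 < x.1} := by
  obtain ⟨s, hbs, has⟩ : ∃ s, b < s ∧ a + s < 0 := ⟨(b - a) / 2, by linarith, by linarith⟩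
  have hf : Integrable ((Ioi 0).indicator fun t => exp ((a + s) * t)) :=
    (integrable_indicator_iff measurableSet_Ioi).mpr (integrableOn_exp_mul_Ioi has 0)
  have hprod : Integrable (fun x : ℝ × ℝ =>
      (Ioi 0).indicator (fun t => exp ((a + s) * t)) x.1 *
        min (exp (b * x.2)) (exp ((b - s) * x.2))) := by
    simpa [Measure.volume_eq_prod] using
      hf.mul_prod (integrable_min_exp_mul hb (sub_neg.mpr hbs))
  refine hprod.integrableOn.mono' (by fun_prop) ?_
  refine (ae_restrict_iff' measurableSet_cone).mpr (ae_of_all _ fun x ⟨hx₁, hx₂₁⟩ => ?_)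
  rw [norm_of_nonneg (exp_pos _).le, Set.indicator_of_mem (mem_Ioi.mpr hx₁),
    mul_min_of_nonneg _ _ (exp_pos _).le, ← exp_add, ← exp_add]
  exact le_min (exp_le_exp.mpr (by nlinarith)) (exp_le_exp.mpr (by nlinarith))

lemma spread_payoff_le_indicator_exp (x : ℝ × ℝ) :
    max (exp x.1 - exp x.2 - 1) 0 ≤ {x : ℝ × ℝ | 0 < x.1 ∧ x.2 < x.1}.indicator (exp ·.1) x := by
  rcases le_or_gt (exp x.1 - exp x.2 - 1) 0 with hle | hpos
  · rw [max_eq_right hle]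
    exact Set.indicator_nonneg (fun _ _ => (exp_pos _).le) x
  · have hx₁ : 0 < x.1 := exp_lt_exp.mp (by rw [exp_zero]; linarith [exp_pos x.2])
    have hx₂₁ : x.2 < x.1 := exp_lt_exp.mp (by linarith)
    rw [Set.indicator_of_mem (show x ∈ {x : ℝ × ℝ | 0 < x.1 ∧ x.2 < x.1} from ⟨hx₁, hx₂₁⟩)]
    exact max_le (by linarith [exp_pos x.2]) (exp_pos _).le

/-- For ε₂ > 0 and ε₁ + ε₂ < -1, the function
`x ↦ e^{ε₁x₁ + ε₂x₂} · (e^{x₁} - e^{x₂} - 1)⁺` is in L¹(ℝ²). -/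
theorem spread_payoff_exp_weight_integrable
    (ε₁ ε₂ : ℝ) (hε₂ : 0 < ε₂) (hε : ε₁ + ε₂ < -1) :
    Integrable
      (fun x : ℝ × ℝ =>
        Real.exp (ε₁ * x.1 + ε₂ * x.2) * max (Real.exp x.1 - Real.exp x.2 - 1) 0)
      (volume : Measure (ℝ × ℝ)) := by
  have hbound : Integrable ({x : ℝ × ℝ | 0 < x.1 ∧ x.2 < x.1}.indicator
      fun x => exp ((ε₁ + 1) * x.1 + ε₂ * x.2)) :=
    (integrableOn_exp_mul_add_mul_cone hε₂ (by linarith)).integrable_indicator measurableSet_cone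
  refine hbound.mono' (by fun_prop) (ae_of_all _ fun x => ?_)
  have hweight : (fun x : ℝ × ℝ => exp ((ε₁ + 1) * x.1 + ε₂ * x.2)) =
      fun x => exp (ε₁ * x.1 + ε₂ * x.2) * exp x.1 := by
    ext x; rw [← exp_add]; ring_nf
  rw [norm_of_nonneg (mul_nonneg (exp_pos _).le (le_max_right _ _)), hweight,
    Set.indicator_mul_right]
  exact mul_le_mul_of_nonneg_left (spread_payoff_le_indicator_exp x) (exp_pos _).le
end

section
/- Let ε = (ε₁, ε₂) be real numbers with ε₂ > 0 and ε₁ + ε₂ < -1. Then the function x = (x₁,x₂) ↦ e^{ε₁x₁ + ε₂x₂} · (e^{x₁} - e^{x₂} - 1)^+ is square integrable on ℝ² (belongs to L²(ℝ²)). -/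
/-!
On the support of the payoff, `e^{x₁} > 1 + e^{x₂}` forces `x₁ > 0` and `x₂ < x₁`, and there the
weighted payoff is at most `e^{(ε₁+1)x₁ + ε₂x₂}`. With `a = -(ε₁ + ε₂ + 1) > 0` this exponent is
`-a x₁ - ε₂ (x₁ - x₂)`, and since `|x₂| ≤ x₁ + (x₁ - x₂)` it is at most `-c (|x₁| + |x₂|)` for
`c = min ε₂ (a / 2) > 0`. So the function is dominated by `e^{-c|x₁|} e^{-c|x₂|}`, a product of
square-integrable functions of one variable each.
-/

open MeasureTheory Real Set

theorem integrable_comp_abs_of_integrableOn_Ioi {E : Type*} [NormedAddCommGroup E] {f : ℝ → E}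
    (hf : IntegrableOn f (Ioi 0)) : Integrable fun x => f |x| := by
  have hIoi : IntegrableOn (fun x => f |x|) (Ioi 0) :=
    hf.congr_fun (fun x hx => by rw [abs_of_pos hx]) measurableSet_Ioi
  have hIic : IntegrableOn (fun x => f |x|) (Iic 0) := by
    rw [← (Measure.measurePreserving_neg volume).integrableOn_comp_preimage
      (Homeomorph.neg ℝ).measurableEmbedding]
    simpa only [Function.comp_def, abs_neg, neg_preimage, neg_Iic, neg_zero]
      using (integrableOn_Ici_iff_integrableOn_Ioi).mpr hIoi
  simpa only [Iic_union_Ioi, integrableOn_univ] using hIic.union hIoi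

theorem integrable_exp_neg_mul_abs {a : ℝ} (ha : 0 < a) :
    Integrable fun x : ℝ => exp (-a * |x|) :=
  integrable_comp_abs_of_integrableOn_Ioi (f := fun x => exp (-a * x))
    (exp_neg_integrableOn_Ioi 0 ha)

theorem memLp_two_exp_neg_mul_abs {c : ℝ} (hc : 0 < c) :
    MemLp (fun x : ℝ => exp (-c * |x|)) 2 := by
  rw [memLp_two_iff_integrable_sq (by fun_prop)]
  refine (integrable_exp_neg_mul_abs (by positivity : 0 < 2 * c)).congr (ae_of_all _ fun x => ?_)
  simp only [← exp_nat_mul]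
  ring_nf

theorem MeasureTheory.MemLp.mul_prod_two {α β : Type*} [MeasurableSpace α] [MeasurableSpace β]
    {μ : Measure α} {ν : Measure β} [SFinite ν] {f : α → ℝ} {g : β → ℝ}
    (hf : MemLp f 2 μ) (hg : MemLp g 2 ν) :
    MemLp (fun z : α × β => f z.1 * g z.2) 2 (μ.prod ν) := by
  refine (memLp_two_iff_integrable_sq (hf.1.comp_fst.mul hg.1.comp_snd)).mpr ?_
  simpa only [Pi.mul_apply, mul_pow] using (hf.integrable_sq.mul_prod hg.integrable_sq)

theorem pos_and_lt_of_exp_sub_exp_sub_one_pos {x₁ x₂ : ℝ} (h : 0 < exp x₁ - exp x₂ - 1) :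
    0 < x₁ ∧ x₂ < x₁ := by
  have := exp_pos x₂
  exact ⟨one_lt_exp_iff.mp (by linarith), exp_lt_exp.mp (by linarith)⟩

theorem add_one_mul_add_mul_le_neg_mul_abs_add_neg_mul_abs {ε₁ ε₂ c x₁ x₂ : ℝ} (hc : 0 ≤ c)
    (hcε₂ : c ≤ ε₂) (hcε : 2 * c ≤ -(ε₁ + ε₂ + 1)) (hx₁ : 0 < x₁) (hx₂ : x₂ < x₁) :
    (ε₁ + 1) * x₁ + ε₂ * x₂ ≤ -c * |x₁| + -c * |x₂| := by
  have habs : |x₂| ≤ 2 * x₁ - x₂ := abs_le.mpr ⟨by linarith, by linarith⟩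
  rw [abs_of_pos hx₁]
  nlinarith [mul_le_mul_of_nonneg_left habs hc,
    mul_nonneg (sub_nonneg.mpr hcε₂) (sub_nonneg.mpr hx₂.le),
    mul_nonneg (by linarith : 0 ≤ -(ε₁ + ε₂ + 1) - 2 * c) hx₁.le]

theorem exp_mul_max_exp_sub_exp_sub_one_le {ε₁ ε₂ c : ℝ} (hc : 0 ≤ c) (hcε₂ : c ≤ ε₂)
    (hcε : 2 * c ≤ -(ε₁ + ε₂ + 1)) (x : ℝ × ℝ) :
    exp (ε₁ * x.1 + ε₂ * x.2) * max (exp x.1 - exp x.2 - 1) 0 ≤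
      exp (-c * |x.1|) * exp (-c * |x.2|) := by
  rcases le_or_gt (exp x.1 - exp x.2 - 1) 0 with hle | hpos
  · rw [max_eq_right hle, mul_zero]
    positivity
  obtain ⟨hx₁, hx₂⟩ := pos_and_lt_of_exp_sub_exp_sub_one_pos hpos
  calc exp (ε₁ * x.1 + ε₂ * x.2) * max (exp x.1 - exp x.2 - 1) 0
      ≤ exp (ε₁ * x.1 + ε₂ * x.2) * exp x.1 := by
        rw [max_eq_left hpos.le]
        gcongr
        linarith [exp_pos x.2]
    _ = exp ((ε₁ + 1) * x.1 + ε₂ * x.2) := by rw [← exp_add]; ring_nf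
    _ ≤ exp (-c * |x.1| + -c * |x.2|) :=
        exp_le_exp.mpr (add_one_mul_add_mul_le_neg_mul_abs_add_neg_mul_abs hc hcε₂ hcε hx₁ hx₂)
    _ = exp (-c * |x.1|) * exp (-c * |x.2|) := exp_add _ _

/-- For ε₂ > 0 and ε₁ + ε₂ < -1, the function
`x ↦ e^{ε₁x₁ + ε₂x₂} · (e^{x₁} - e^{x₂} - 1)⁺` is in L²(ℝ²). -/
theorem spread_payoff_exp_weight_memL2
    (ε₁ ε₂ : ℝ) (hε₂ : 0 < ε₂) (hε : ε₁ + ε₂ < -1) :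
    MemLp
      (fun x : ℝ × ℝ =>
        Real.exp (ε₁ * x.1 + ε₂ * x.2) * max (Real.exp x.1 - Real.exp x.2 - 1) 0)
      2 (volume : Measure (ℝ × ℝ)) := by
  set c := min ε₂ (-(ε₁ + ε₂ + 1) / 2)
  have hc : 0 < c := lt_min hε₂ (by linarith)
  have hcε : 2 * c ≤ -(ε₁ + ε₂ + 1) := by linarith [min_le_right ε₂ (-(ε₁ + ε₂ + 1) / 2)]
  refine ((memLp_two_exp_neg_mul_abs hc).mul_prod_two (memLp_two_exp_neg_mul_abs hc)).of_le
    (by fun_prop) (ae_of_all _ fun x => ?_)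
  rw [norm_of_nonneg (by positivity), norm_of_nonneg (by positivity)]
  exact exp_mul_max_exp_sub_exp_sub_one_le hc.le (min_le_left _ _) hcε x
end

section
/- Let x₁ > 0 be real and let u₂ ∈ ℂ with Im(u₂) > 0. Then ∫_{-∞}^{log(e^{x₁}-1)} e^{-iu₂x₂} · ((e^{x₁}-1) - e^{x₂}) dx₂ = (e^{x₁}-1)^{1-iu₂} · (1/(-iu₂) - 1/(1-iu₂)), where (e^{x₁}-1)^{1-iu₂} denotes the complex power of the positive real number e^{x₁}-1. -/
/-! With `k = e^{x₁} - 1` and `c = -iu₂`, the integrand is `k e^{cx} - e^{(1+c)x}`. Since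
`Re c > 0` both terms are integrable on `(-∞, log k]`, each integrates to `e^{a log k} / a`, and
`e^{a log k} = k^a`. -/

open MeasureTheory Set

lemma Complex.exp_mul_ofReal_log {k : ℝ} (hk : 0 < k) (c : ℂ) :
    Complex.exp (c * (Real.log k : ℝ)) = (k : ℂ) ^ c := by
  rw [Complex.cpow_def_of_ne_zero (Complex.ofReal_ne_zero.mpr hk.ne'),
    Complex.ofReal_log hk.le, mul_comm]

lemma integral_Iio_log_exp_mul_mul_sub_exp {k : ℝ} (hk : 0 < k) {c : ℂ} (hc : 0 < c.re) :
    ∫ x : ℝ in Iio (Real.log k), Complex.exp (c * x) * ((k : ℂ) - ((Real.exp x : ℝ) : ℂ)) =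
      (k : ℂ) ^ (1 + c) * (1 / c - 1 / (1 + c)) := by
  have hc₁ : 0 < (1 + c).re := by simp only [Complex.add_re, Complex.one_re]; linarith
  have hc_ne : c ≠ 0 := fun h => by simp [h] at hc
  have hc₁_ne : 1 + c ≠ 0 := fun h => by simp [h] at hc₁
  have hsplit : ∀ x : ℝ, Complex.exp (c * x) * ((k : ℂ) - ((Real.exp x : ℝ) : ℂ)) =
      (k : ℂ) * Complex.exp (c * x) - Complex.exp ((1 + c) * x) := fun x => by
    rw [Complex.ofReal_exp, add_mul, one_mul, Complex.exp_add]; ring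
  simp_rw [hsplit, ← integral_Iic_eq_integral_Iio]
  rw [integral_sub ((integrableOn_exp_mul_complex_Iic hc _).const_mul _)
      (integrableOn_exp_mul_complex_Iic hc₁ _), integral_const_mul,
    integral_exp_mul_complex_Iic hc, integral_exp_mul_complex_Iic hc₁,
    Complex.exp_mul_ofReal_log hk, Complex.exp_mul_ofReal_log hk,
    Complex.cpow_add _ _ (Complex.ofReal_ne_zero.mpr hk.ne'), Complex.cpow_one]
  field_simp

/-- The inner integral in the derivation of the spread payoff transform:
for `x₁ > 0` and `Im u₂ > 0`,
`∫_{-∞}^{log(e^{x₁}-1)} e^{-iu₂x₂}((e^{x₁}-1) - e^{x₂}) dx₂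
  = (e^{x₁}-1)^{1-iu₂} (1/(-iu₂) - 1/(1-iu₂))`. -/
theorem spread_payoff_inner_integral
    (x₁ : ℝ) (hx₁ : 0 < x₁) (u₂ : ℂ) (hu₂ : 0 < u₂.im) :
    (∫ x₂ : ℝ in Set.Iio (Real.log (Real.exp x₁ - 1)),
        Complex.exp (-Complex.I * u₂ * (x₂ : ℂ)) *
          (((Real.exp x₁ - 1 : ℝ) : ℂ) - ((Real.exp x₂ : ℝ) : ℂ))) =
      ((Real.exp x₁ - 1 : ℝ) : ℂ) ^ (1 - Complex.I * u₂) *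
        (1 / (-Complex.I * u₂) - 1 / (1 - Complex.I * u₂)) := by
  have hk : 0 < Real.exp x₁ - 1 := sub_pos.mpr (Real.one_lt_exp_iff.mpr hx₁)
  have hc : 0 < (-Complex.I * u₂).re := by simpa using hu₂
  rw [integral_Iio_log_exp_mul_mul_sub_exp hk hc, neg_mul, ← sub_eq_add_neg]
end

section
/- Let u₁, u₂ ∈ ℂ with Im(u₂) > 0 and Im(u₁) + Im(u₂) < -1. Then ∫_0^∞ e^{-iu₁x₁} · (e^{x₁}-1)^{1-iu₂} dx₁ = Γ(i(u₁+u₂)-1)·Γ(2-iu₂)/Γ(iu₁+1), where (e^{x₁}-1)^{1-iu₂} denotes the complex power of the positive real number e^{x₁}-1 and Γ is the complex gamma function. -/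
/-!
Substituting `t = e^{-x}` turns `∫_0^∞ e^{-a x} (e^x - 1)^b dx` into the Beta integral
`∫_0^1 t^{a-b-1} (1-t)^b dt = B(a - b, b + 1)`, and `Γ(u) Γ(v) = Γ(u + v) B(u, v)`.
-/

open MeasureTheory Real Set

lemma image_neg_log_Ioo_zero_one : (fun t : ℝ => -log t) '' Ioo 0 1 = Ioi 0 := by
  rw [show (fun t : ℝ => -log t) = Neg.neg ∘ log from rfl, image_comp,
    image_log_Ioo_zero one_pos, log_one, image_neg_Iio, neg_zero]

lemma integral_Ioi_zero_eq_integral_Ioo_comp_neg_log {E : Type*} [NormedAddCommGroup E]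
    [NormedSpace ℝ E] (f : ℝ → E) :
    ∫ x in Ioi 0, f x = ∫ t in Ioo 0 1, t⁻¹ • f (-log t) := by
  rw [← image_neg_log_Ioo_zero_one,
    integral_image_eq_integral_abs_deriv_smul (f := fun t => -log t) measurableSet_Ioo
    (fun t ht => (hasDerivAt_log ht.1.ne').neg.hasDerivWithinAt)
    (fun x hx y hy hxy => log_injOn_pos hx.1 hy.1 (neg_inj.mp hxy))]
  refine setIntegral_congr_fun measurableSet_Ioo fun t ht => ?_
  rw [abs_neg, abs_inv, abs_of_pos ht.1]

lemma inv_smul_cexp_mul_exp_sub_one_cpow_neg_log (a b : ℂ) {t : ℝ} (ht₀ : 0 < t) (ht₁ : t ≤ 1) :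
    t⁻¹ • (Complex.exp (-a * ((-log t : ℝ) : ℂ)) * ((exp (-log t) - 1 : ℝ) : ℂ) ^ b) =
      (t : ℂ) ^ (a - b - 1) * (1 - (t : ℂ)) ^ (b + 1 - 1) := by
  have ht : (t : ℂ) ≠ 0 := Complex.ofReal_ne_zero.mpr ht₀.ne'
  have hexp : Complex.exp (-a * ((-log t : ℝ) : ℂ)) = (t : ℂ) ^ a := by
    rw [Complex.cpow_def_of_ne_zero ht, ← Complex.ofReal_log ht₀.le]
    push_cast
    ring_nf
  have hbase : exp (-log t) - 1 = (1 - t) * t⁻¹ := by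
    rw [exp_neg, exp_log ht₀]
    field_simp
  have hpow : (((1 - t) * t⁻¹ : ℝ) : ℂ) ^ b = ((1 - t : ℝ) : ℂ) ^ b * (t : ℂ) ^ (-b) := by
    rw [Complex.ofReal_mul, Complex.mul_cpow_ofReal_nonneg (by linarith) (by positivity),
      Complex.ofReal_inv,
      Complex.inv_cpow _ _ (by simp [Complex.arg_ofReal_of_nonneg ht₀.le, pi_ne_zero.symm]),
      ← Complex.cpow_neg]
  rw [hexp, hbase, hpow, Complex.real_smul, Complex.ofReal_inv, add_sub_cancel_right,
    Complex.cpow_sub _ _ ht, Complex.cpow_sub _ _ ht, Complex.cpow_one, Complex.cpow_neg,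
    Complex.ofReal_sub, Complex.ofReal_one]
  field_simp

theorem integral_cexp_mul_exp_sub_one_cpow_eq_betaIntegral (a b : ℂ) :
    ∫ x : ℝ in Ioi 0, Complex.exp (-a * x) * ((exp x - 1 : ℝ) : ℂ) ^ b =
      Complex.betaIntegral (a - b) (b + 1) := by
  rw [integral_Ioi_zero_eq_integral_Ioo_comp_neg_log, Complex.betaIntegral,
    intervalIntegral.integral_of_le zero_le_one, integral_Ioc_eq_integral_Ioo]
  exact setIntegral_congr_fun measurableSet_Ioo fun t ht =>
    inv_smul_cexp_mul_exp_sub_one_cpow_neg_log a b ht.1 ht.2.le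

theorem integral_cexp_mul_exp_sub_one_cpow_eq_Gamma {a b : ℂ} (hab : 0 < (a - b).re)
    (hb : -1 < b.re) :
    ∫ x : ℝ in Ioi 0, Complex.exp (-a * x) * ((exp x - 1 : ℝ) : ℂ) ^ b =
      Complex.Gamma (a - b) * Complex.Gamma (b + 1) / Complex.Gamma (a + 1) := by
  have hb' : 0 < (b + 1).re := by rw [Complex.add_re, Complex.one_re]; linarith
  have hsum : a - b + (b + 1) = a + 1 := by ring
  have hΓ : Complex.Gamma (a + 1) ≠ 0 :=
    Complex.Gamma_ne_zero_of_re_pos (by rw [← hsum, Complex.add_re]; linarith)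
  rw [integral_cexp_mul_exp_sub_one_cpow_eq_betaIntegral,
    Complex.Gamma_mul_Gamma_eq_betaIntegral hab hb', hsum, mul_div_cancel_left₀ _ hΓ]

/-- The outer integral in the derivation of the spread payoff transform:
for `Im u₂ > 0` and `Im u₁ + Im u₂ < -1`,
`∫_0^∞ e^{-iu₁x₁}(e^{x₁}-1)^{1-iu₂} dx₁ = Γ(i(u₁+u₂)-1)Γ(2-iu₂)/Γ(iu₁+1)`. -/
theorem spread_payoff_outer_integral
    (u₁ u₂ : ℂ) (hu₂ : 0 < u₂.im) (hsum : u₁.im + u₂.im < -1) :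
    (∫ x₁ : ℝ in Set.Ioi (0 : ℝ),
        Complex.exp (-Complex.I * u₁ * (x₁ : ℂ)) *
          ((Real.exp x₁ - 1 : ℝ) : ℂ) ^ (1 - Complex.I * u₂)) =
      Complex.Gamma (Complex.I * (u₁ + u₂) - 1) * Complex.Gamma (2 - Complex.I * u₂) /
        Complex.Gamma (Complex.I * u₁ + 1) := by
  have h := integral_cexp_mul_exp_sub_one_cpow_eq_Gamma
    (a := Complex.I * u₁) (b := 1 - Complex.I * u₂)
    (by simp only [Complex.sub_re, Complex.I_mul_re, Complex.one_re]; linarith)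
    (by simp only [Complex.sub_re, Complex.I_mul_re, Complex.one_re]; linarith)
  rw [show Complex.I * u₁ - (1 - Complex.I * u₂) = Complex.I * (u₁ + u₂) - 1 by ring,
    show 1 - Complex.I * u₂ + 1 = 2 - Complex.I * u₂ by ring] at h
  simpa only [neg_mul] using h
end

section
/- Fix ε > 0 and set ε₂ = ε, ε₁ = -1-2ε. Then for all v = (v₁,v₂) ∈ ℝ², |P̂(v₁ + iε₁, v₂ + iε₂)| ≤ (Γ(ε)·Γ(2+ε)/Γ(2+2ε)) · Q(‖v‖²/5)^{-1/2}, where ‖v‖² = v₁² + v₂² and Q(z) = (z+ε²)(z+(1+ε)²). -/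
/-!
With `a = ε + i(v₁ + v₂)` and `b = ε - i v₂`, both on the line `Re = ε`, the transform is
`P̂ = Γ(a) Γ(b) / Γ(a + b + 2)`. Two applications of `Γ(z + 1) = z Γ(z)` turn this into
`B(a + 2, b) / (a (a + 1))`, and the Beta integral is bounded in modulus by its value at the
real parts, `B(2 + ε, ε)`. Since `|a|² |a + 1|² = ((Im a)² + ε²)((Im a)² + (1 + ε)²)`, this
gives the bound with `(Im a)²` in place of `‖v‖²/5`; by symmetry the same holds with
`(Im b)²`, and `max((v₁ + v₂)², v₂²) ≥ (v₁² + v₂²)/5`.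
-/

open MeasureTheory ProbabilityTheory

-- `x = (x + y) - y`, so `x² ≤ 2 (x + y)² + 2 y²`.
lemma sq_add_sq_div_five_le_max (x y : ℝ) :
    (x ^ 2 + y ^ 2) / 5 ≤ max ((x + y) ^ 2) (y ^ 2) := by
  nlinarith [le_max_left ((x + y) ^ 2) (y ^ 2), le_max_right ((x + y) ^ 2) (y ^ 2),
    sq_nonneg (x + 2 * y)]

namespace Complex

lemma norm_betaIntegral_le {u w : ℂ} (hu : 0 < u.re) (hw : 0 < w.re) :
    ‖betaIntegral u w‖ ≤ beta u.re w.re := by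
  have hnorm : ∀ᵐ t : ℝ, t ∈ Set.uIoc 0 1 →
      ‖(t : ℂ) ^ (u - 1) * (1 - (t : ℂ)) ^ (w - 1)‖ =
        re ((t : ℂ) ^ ((u.re : ℂ) - 1) * (1 - (t : ℂ)) ^ ((w.re : ℂ) - 1)) := by
    -- at `t = 1` the base `1 - t` vanishes and `‖0 ^ (w - 1)‖` can differ from `0 ^ (w.re - 1)`
    filter_upwards [Measure.ae_ne volume 1] with t ht1 ht
    rw [Set.uIoc_of_le zero_le_one] at ht
    have h0 : 0 < t := ht.1
    have h1 : 0 < 1 - t := sub_pos.2 (lt_of_le_of_ne ht.2 ht1)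
    rw [← ofReal_one, ← ofReal_sub, norm_mul, norm_cpow_eq_rpow_re_of_pos h0,
      norm_cpow_eq_rpow_re_of_pos h1]
    norm_cast
    rw [← ofReal_cpow h0.le, ← ofReal_cpow h1.le, ← ofReal_mul, ofReal_re]
    simp
  calc ‖betaIntegral u w‖
      ≤ ∫ t in (0 : ℝ)..1, ‖(t : ℂ) ^ (u - 1) * (1 - (t : ℂ)) ^ (w - 1)‖ :=
        intervalIntegral.norm_integral_le_integral_norm zero_le_one
    _ = re (betaIntegral u.re w.re) := by
        rw [intervalIntegral.integral_congr_ae hnorm, betaIntegral]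
        exact intervalIntegral.intervalIntegral_re (betaIntegral_convergent (by simpa) (by simpa))
    _ = beta u.re w.re := (beta_eq_betaIntegralReal _ _ hu hw).symm

lemma Gamma_mul_Gamma_div_Gamma_add_two {a w : ℂ} (ha : -2 < a.re) (ha₀ : a ≠ 0)
    (ha₁ : a + 1 ≠ 0) (hw : 0 < w.re) :
    Gamma a * Gamma w / Gamma (a + w + 2) = betaIntegral (a + 2) w / (a * (a + 1)) := by
  have hGamma : Gamma (a + 2) = (a + 1) * (a * Gamma a) := by
    rw [show a + 2 = a + 1 + 1 by ring, Gamma_add_one _ ha₁, Gamma_add_one _ ha₀]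
  rw [betaIntegral_eq_Gamma_mul_div _ _ (by simp; linarith) hw, hGamma,
    show a + 2 + w = a + w + 2 by ring]
  field_simp

lemma norm_Gamma_mul_Gamma_div_Gamma_add_two_le {a w : ℂ} (ha : 0 < a.re) (hw : 0 < w.re) :
    ‖Gamma a * Gamma w / Gamma (a + w + 2)‖ ≤
      beta (a.re + 2) w.re / (‖a‖ * ‖a + 1‖) := by
  have ha₀ : a ≠ 0 := fun h => by simp [h] at ha
  have ha₁ : a + 1 ≠ 0 := fun h => by
    have := congrArg re h
    simp at this
    linarith
  rw [Gamma_mul_Gamma_div_Gamma_add_two (by linarith) ha₀ ha₁ hw, norm_div, norm_mul]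
  gcongr
  simpa using norm_betaIntegral_le (u := a + 2) (by simp; linarith) hw

lemma norm_mul_norm_add_one (a : ℂ) :
    ‖a‖ * ‖a + 1‖ = √((a.im ^ 2 + a.re ^ 2) * (a.im ^ 2 + (1 + a.re) ^ 2)) := by
  rw [norm_def, norm_def, ← Real.sqrt_mul (normSq_nonneg _), normSq_apply, normSq_apply]
  simp only [add_re, add_im, one_re, one_im]
  ring_nf

lemma norm_Gamma_mul_Gamma_div_Gamma_add_two_le_of_re_eq {ε q : ℝ} {a b : ℂ} (hε : 0 < ε)
    (ha : a.re = ε) (hb : b.re = ε) (hq₀ : 0 ≤ q) (hq : q ≤ max (a.im ^ 2) (b.im ^ 2)) :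
    ‖Gamma a * Gamma b / Gamma (a + b + 2)‖ ≤
      Real.Gamma ε * Real.Gamma (2 + ε) / Real.Gamma (2 + 2 * ε) *
        (√((q + ε ^ 2) * (q + (1 + ε) ^ 2)))⁻¹ := by
  wlog hqa : q ≤ a.im ^ 2 generalizing a b
  · rw [mul_comm, add_comm a]
    exact this hb ha (by rwa [max_comm]) ((le_max_iff.1 hq).resolve_left hqa)
  have hbeta : beta (ε + 2) ε =
      Real.Gamma ε * Real.Gamma (2 + ε) / Real.Gamma (2 + 2 * ε) := by
    rw [beta, mul_comm, add_comm ε 2, add_assoc, ← two_mul]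
  have hbeta_pos : 0 < beta (ε + 2) ε :=
    beta_pos (by linarith) hε
  calc ‖Gamma a * Gamma b / Gamma (a + b + 2)‖
      ≤ beta (ε + 2) ε *
          (√((a.im ^ 2 + ε ^ 2) * (a.im ^ 2 + (1 + ε) ^ 2)))⁻¹ := by
        have h := norm_Gamma_mul_Gamma_div_Gamma_add_two_le (a := a) (w := b)
          (by linarith) (by linarith)
        rwa [norm_mul_norm_add_one, ha, hb, div_eq_mul_inv] at h
    _ ≤ _ := by
        rw [← hbeta]
        gcongr

end Complex

/-- **Corollary (decay bound on P̂).** With ε₂ = ε > 0 and ε₁ = -1-2ε,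
`|P̂(v + iε)| ≤ (Γ(ε)Γ(2+ε)/Γ(2+2ε)) · Q(‖v‖²/5)^{-1/2}` where
`Q(z) = (z+ε²)(z+(1+ε)²)`. -/
theorem spread_payoff_transform_decay_bound
    (ε : ℝ) (hε : 0 < ε) (v₁ v₂ : ℝ) :
    ‖
        (Complex.Gamma
            (Complex.I *
                (((v₁ : ℂ) + Complex.I * ((-1 - 2 * ε : ℝ) : ℂ)) +
                  ((v₂ : ℂ) + Complex.I * (ε : ℂ))) - 1) *
          Complex.Gamma (-Complex.I * ((v₂ : ℂ) + Complex.I * (ε : ℂ))) /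
          Complex.Gamma (Complex.I * ((v₁ : ℂ) + Complex.I * ((-1 - 2 * ε : ℝ) : ℂ)) + 1))‖ ≤
      Real.Gamma ε * Real.Gamma (2 + ε) / Real.Gamma (2 + 2 * ε) *
        (Real.sqrt
            (((v₁ ^ 2 + v₂ ^ 2) / 5 + ε ^ 2) *
              ((v₁ ^ 2 + v₂ ^ 2) / 5 + (1 + ε) ^ 2)))⁻¹ := by
  set a : ℂ := ε + (v₁ + v₂ : ℝ) * Complex.I
  set b : ℂ := ε + (-v₂ : ℝ) * Complex.I
  have ha : Complex.I * (((v₁ : ℂ) + Complex.I * ((-1 - 2 * ε : ℝ) : ℂ)) +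
      ((v₂ : ℂ) + Complex.I * (ε : ℂ))) - 1 = a := by
    push_cast [a]
    linear_combination (-1 - (ε : ℂ)) * Complex.I_sq
  have hb : -Complex.I * ((v₂ : ℂ) + Complex.I * (ε : ℂ)) = b := by
    push_cast [b]
    linear_combination -(ε : ℂ) * Complex.I_sq
  have hab :
      Complex.I * ((v₁ : ℂ) + Complex.I * ((-1 - 2 * ε : ℝ) : ℂ)) + 1 = a + b + 2 := by
    push_cast [a, b]
    linear_combination (-1 - 2 * (ε : ℂ)) * Complex.I_sq
  rw [ha, hb, hab]
  refine Complex.norm_Gamma_mul_Gamma_div_Gamma_add_two_le_of_re_eq hε (by simp [a]) (by simp [b])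
    (by positivity) ?_
  simpa [a, b] using sq_add_sq_div_five_le_max v₁ v₂
end

section
/- Let M ≥ 1 be an integer, p > 0 a real number, and s₁, …, s_M complex numbers with Re(s_m) > 0 for every m. Then the Dirichlet-type integral over the open simplex satisfies ∫_{{q ∈ (0,∞)^{M-1} : q₁+⋯+q_{M-1} < p}} ( ∏_{m=1}^{M-1} q_m^{s_m - 1} ) · (p - q₁ - ⋯ - q_{M-1})^{s_M - 1} d^{M-1}q = ( ∏_{m=1}^{M} Γ(s_m) / Γ(s₁+⋯+s_M) ) · p^{s₁+⋯+s_M - 1}. (For M = 1 the left-hand side is interpreted as p^{s₁-1}.) Equivalently, with s_m = -iu_m for u_m ∈ ℂ with Im(u_m) > 0, this is the identity ∫_{ℝ^M} e^z δ(e^z - Σ_m e^{x_m}) e^{-iu·x} d^Mx = (∏_m Γ(-iu_m)/Γ(-iΣ_m u_m)) e^{-i(Σ_m u_m)z} after resolving the delta function. -/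
/-!
Induction on `N`, splitting off the first coordinate `x = q₀`. For fixed `x ∈ (0, p)` the
remaining coordinates run over the simplex of size `p - x`, so by Fubini and the induction
hypothesis the integral becomes `C · ∫₀^p x^{s₀-1} (p-x)^{T-1} dx` with `T = s₁ + ⋯ + s_N`,
a scaled Beta integral `p^{s₀+T-1} B(s₀, T)`; then `B = Γ Γ / Γ` closes the induction.
Integrability is carried along: the norm of the integrand is the integrand at the real parts
of the exponents, whose integral is known by the same induction.
-/

open MeasureTheory Set

section FinCons

variable {α E : Type*} [MeasureSpace α] [SigmaFinite (volume : Measure α)]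
  [NormedAddCommGroup E] {n : ℕ}

theorem MeasurableEquiv.coe_piFinSuccAbove_zero_symm {β : Type*} [MeasurableSpace β] :
    ⇑(MeasurableEquiv.piFinSuccAbove (fun _ : Fin (n + 1) => β) 0).symm =
      fun z => Fin.cons z.1 z.2 := by
  ext z : 1
  simp [MeasurableEquiv.piFinSuccAbove]
  rfl

theorem integrable_comp_finCons_iff {f : (Fin (n + 1) → α) → E} :
    Integrable (fun z : α × (Fin n → α) => f (Fin.cons z.1 z.2)) ↔ Integrable f := by
  have h := (volume_preserving_piFinSuccAbove (fun _ : Fin (n + 1) => α) 0).symm.integrable_comp_emb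
    (MeasurableEquiv.measurableEmbedding _) (g := f)
  rwa [MeasurableEquiv.coe_piFinSuccAbove_zero_symm] at h

theorem integral_comp_finCons [NormedSpace ℝ E] (f : (Fin (n + 1) → α) → E) :
    ∫ z : α × (Fin n → α), f (Fin.cons z.1 z.2) = ∫ q, f q := by
  have h := (volume_preserving_piFinSuccAbove (fun _ : Fin (n + 1) => α) 0).symm.integral_comp' f
  rwa [MeasurableEquiv.coe_piFinSuccAbove_zero_symm] at h

end FinCons

theorem Set.indicator_Ioi_mul_indicator_Ioi_sub {M : Type*} [MulZeroClass M] (f g : ℝ → M)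
    (p x : ℝ) :
    (Ioi 0).indicator f x * (Ioi 0).indicator g (p - x) =
      (Ioo 0 p).indicator (fun x => f x * g (p - x)) x := by
  by_cases hx : 0 < x <;> by_cases hpx : 0 < p - x <;>
    simp_all [sub_pos]

namespace Complex

theorem integrableOn_Ioo_cpow_mul_sub_cpow {u v : ℂ} (hu : 0 < u.re) (hv : 0 < v.re) (p : ℝ) :
    IntegrableOn (fun x : ℝ => (x : ℂ) ^ (u - 1) * ((p - x : ℝ) : ℂ) ^ (v - 1)) (Ioo 0 p) := by
  rcases le_or_gt p 0 with hp | hp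
  · simp [Ioo_eq_empty_of_le hp]
  have hscaled := (betaIntegral_convergent hu hv).comp_mul_right (c := p⁻¹)
  rw [zero_div, one_div, inv_inv, intervalIntegrable_iff_integrableOn_Ioo_of_le hp.le] at hscaled
  refine IntegrableOn.congr_fun (hscaled.const_mul ((p : ℂ) ^ (u - 1) * (p : ℂ) ^ (v - 1)))
    (fun x hx => ?_) measurableSet_Ioo
  have hp' : (p : ℂ) ≠ 0 := ofReal_ne_zero.2 hp.ne'
  have hsub : (1 : ℂ) - ((x * p⁻¹ : ℝ) : ℂ) = (((p - x) * p⁻¹ : ℝ) : ℂ) := by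
    push_cast; field_simp
  rw [hsub, mul_mul_mul_comm, ← mul_cpow_ofReal_nonneg hp.le (by have := hx.1; positivity),
    ← mul_cpow_ofReal_nonneg hp.le (mul_nonneg (sub_nonneg.2 hx.2.le) (by positivity))]
  congr 3 <;> push_cast <;> field_simp

theorem integral_Ioo_cpow_mul_sub_cpow (u v : ℂ) {p : ℝ} (hp : 0 < p) :
    ∫ x in Ioo 0 p, (x : ℂ) ^ (u - 1) * ((p - x : ℝ) : ℂ) ^ (v - 1) =
      (p : ℂ) ^ (u + v - 1) * betaIntegral u v := by
  rw [← integral_Ioc_eq_integral_Ioo, ← intervalIntegral.integral_of_le hp.le,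
    ← betaIntegral_scaled u v hp]
  simp only [ofReal_sub]

theorem ofReal_norm_ofReal_cpow_sub_one {r : ℝ} (hr : 0 < r) (w : ℂ) :
    ((‖(r : ℂ) ^ (w - 1)‖ : ℝ) : ℂ) = (r : ℂ) ^ ((w.re : ℂ) - 1) := by
  rw [norm_cpow_eq_rpow_re_of_pos hr, ofReal_cpow hr.le]
  simp

theorem prod_Gamma_div_Gamma_sum_eq_mul_betaIntegral {N : ℕ} (s : Fin (N + 2) → ℂ)
    (hs : ∀ m, 0 < (s m).re) :
    (∏ m, Gamma (s m)) / Gamma (∑ m, s m) =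
      (∏ m, Gamma (Fin.tail s m)) / Gamma (∑ m, Fin.tail s m) *
        betaIntegral (s 0) (∑ m, Fin.tail s m) := by
  have hT : 0 < (∑ m, Fin.tail s m).re := by
    rw [re_sum]
    exact Finset.sum_pos (fun m _ => hs m.succ) Finset.univ_nonempty
  have hΓT := Gamma_ne_zero_of_re_pos hT
  rw [betaIntegral_eq_Gamma_mul_div _ _ (hs 0) hT, Fin.prod_univ_succ, Fin.sum_univ_succ]
  field_simp
  rfl

end Complex

theorem integrable_indicator_cpow_mul_indicator_cpow_sub {u v : ℂ} (hu : 0 < u.re) (hv : 0 < v.re)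
    (c : ℂ) (p : ℝ) :
    Integrable fun x => (Ioi 0).indicator (fun x : ℝ => (x : ℂ) ^ (u - 1)) x *
      (Ioi 0).indicator (fun r : ℝ => c * (r : ℂ) ^ (v - 1)) (p - x) := by
  simp_rw [indicator_Ioi_mul_indicator_Ioi_sub, integrable_indicator_iff measurableSet_Ioo,
    mul_left_comm _ c]
  exact (Complex.integrableOn_Ioo_cpow_mul_sub_cpow hu hv p).const_mul c

theorem integral_indicator_cpow_mul_indicator_cpow_sub (u v c : ℂ) (p : ℝ) :
    ∫ x, (Ioi 0).indicator (fun x : ℝ => (x : ℂ) ^ (u - 1)) x *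
      (Ioi 0).indicator (fun r : ℝ => c * (r : ℂ) ^ (v - 1)) (p - x) =
    (Ioi 0).indicator (fun p : ℝ => c * Complex.betaIntegral u v * (p : ℂ) ^ (u + v - 1)) p := by
  simp_rw [indicator_Ioi_mul_indicator_Ioi_sub, integral_indicator measurableSet_Ioo,
    mul_left_comm _ c, integral_const_mul]
  rcases le_or_gt p 0 with hp | hp
  · simp [hp]
  · rw [Complex.integral_Ioo_cpow_mul_sub_cpow u v hp, indicator_of_mem (mem_Ioi.2 hp)]
    ring

noncomputable section

def dirichletSimplex (N : ℕ) (p : ℝ) : Set (Fin N → ℝ) :=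
  {q | (∀ m, 0 < q m) ∧ ∑ m, q m < p}

def dirichletIntegrand (N : ℕ) (p : ℝ) (s : Fin (N + 1) → ℂ) (q : Fin N → ℝ) : ℂ :=
  (∏ m : Fin N, ((q m : ℝ) : ℂ) ^ (s m.castSucc - 1)) *
    (((p - ∑ m, q m : ℝ) : ℂ) ^ (s (Fin.last N) - 1))

def dirichletKernel (N : ℕ) (p : ℝ) (s : Fin (N + 1) → ℂ) : (Fin N → ℝ) → ℂ :=
  (dirichletSimplex N p).indicator (dirichletIntegrand N p s)

end

theorem measurableSet_dirichletSimplex (N : ℕ) (p : ℝ) :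
    MeasurableSet (dirichletSimplex N p) := by
  unfold dirichletSimplex
  measurability

theorem measurable_dirichletKernel (N : ℕ) (p : ℝ) (s : Fin (N + 1) → ℂ) :
    Measurable (dirichletKernel N p s) :=
  Measurable.indicator (by unfold dirichletIntegrand; fun_prop) (measurableSet_dirichletSimplex N p)

theorem cons_mem_dirichletSimplex_iff {N : ℕ} {p x : ℝ} {y : Fin N → ℝ} :
    (Fin.cons x y : Fin (N + 1) → ℝ) ∈ dirichletSimplex (N + 1) p ↔
      0 < x ∧ y ∈ dirichletSimplex N (p - x) := by
  simp only [dirichletSimplex, mem_ofPred_eq, Fin.forall_fin_succ, Fin.cons_zero, Fin.cons_succ,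
    Fin.sum_cons, lt_sub_iff_add_lt', and_assoc]

theorem dirichletIntegrand_cons (N : ℕ) (p x : ℝ) (y : Fin N → ℝ) (s : Fin (N + 2) → ℂ) :
    dirichletIntegrand (N + 1) p s (Fin.cons x y) =
      (x : ℂ) ^ (s 0 - 1) * dirichletIntegrand N (p - x) (Fin.tail s) y := by
  simp only [dirichletIntegrand, Fin.prod_univ_succ, Fin.sum_cons, Fin.cons_zero, Fin.cons_succ,
    Fin.castSucc_zero, Fin.succ_castSucc, Fin.succ_last, Fin.tail, sub_add_eq_sub_sub, mul_assoc]

theorem dirichletKernel_cons (N : ℕ) (p x : ℝ) (y : Fin N → ℝ) (s : Fin (N + 2) → ℂ) :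
    dirichletKernel (N + 1) p s (Fin.cons x y) =
      (Ioi 0).indicator (fun x : ℝ => (x : ℂ) ^ (s 0 - 1)) x *
        dirichletKernel N (p - x) (Fin.tail s) y := by
  by_cases hx : 0 < x <;> by_cases hy : y ∈ dirichletSimplex N (p - x) <;>
    simp [dirichletKernel, cons_mem_dirichletSimplex_iff, dirichletIntegrand_cons, hx, hy]

theorem dirichletKernel_zero (p : ℝ) (s : Fin 1 → ℂ) (q : Fin 0 → ℝ) :
    dirichletKernel 0 p s q = (Ioi 0).indicator (fun p : ℝ => (p : ℂ) ^ (s 0 - 1)) p := by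
  simp [dirichletKernel, dirichletSimplex, dirichletIntegrand, indicator]

theorem ofReal_norm_dirichletKernel (N : ℕ) (p : ℝ) (s : Fin (N + 1) → ℂ) (q : Fin N → ℝ) :
    ((‖dirichletKernel N p s q‖ : ℝ) : ℂ) = dirichletKernel N p (fun m => ((s m).re : ℂ)) q := by
  by_cases hq : q ∈ dirichletSimplex N p
  · simp only [dirichletKernel, indicator_of_mem hq, dirichletIntegrand, norm_mul, norm_prod,
      Complex.ofReal_mul, Complex.ofReal_prod, Complex.ofReal_norm_ofReal_cpow_sub_one (hq.1 _),
      Complex.ofReal_norm_ofReal_cpow_sub_one (sub_pos.2 hq.2)]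
  · simp [dirichletKernel, hq]

theorem integral_norm_dirichletKernel (N : ℕ) (p : ℝ) (s : Fin (N + 1) → ℂ) :
    ∫ q, ‖dirichletKernel N p s q‖ = ‖∫ q, dirichletKernel N p (fun m => ((s m).re : ℂ)) q‖ := by
  rw [← integral_congr_ae (Filter.Eventually.of_forall (ofReal_norm_dirichletKernel N p s)),
    integral_complex_ofReal, Complex.norm_real,
    Real.norm_of_nonneg (integral_nonneg fun _ => norm_nonneg _)]

-- Stated for every `p` (the simplex is empty when `p ≤ 0`) so that the induction hypothesis
-- applies at `p - x` for every `x`.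
theorem integrable_dirichletKernel_and_integral_eq (N : ℕ) (p : ℝ) (s : Fin (N + 1) → ℂ)
    (hs : ∀ m, 0 < (s m).re) :
    Integrable (dirichletKernel N p s) ∧ ∫ q, dirichletKernel N p s q =
      (Ioi 0).indicator (fun p : ℝ => (∏ m, Complex.Gamma (s m)) / Complex.Gamma (∑ m, s m) *
        (p : ℂ) ^ (∑ m, s m - 1)) p := by
  induction N generalizing p with
  | zero =>
    rw [funext (dirichletKernel_zero p s)]
    refine ⟨integrable_const _, ?_⟩
    simp [Complex.Gamma_ne_zero_of_re_pos (hs 0), measureReal_def, volume_pi]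
  | succ N ih =>
    have hs' : ∀ m, 0 < (Fin.tail s m).re := fun m => hs m.succ
    have hσ : ∀ m, 0 < ((Fin.tail s m).re : ℂ).re := by simpa using hs'
    have hσT : 0 < (∑ m, ((Fin.tail s m).re : ℂ)).re := by
      rw [Complex.re_sum]
      exact Finset.sum_pos (fun m _ => hσ m) Finset.univ_nonempty
    have hint : Integrable (dirichletKernel (N + 1) p s) := by
      rw [← integrable_comp_finCons_iff, Measure.volume_eq_prod, integrable_prod_iff]
      · refine ⟨ae_of_all _ fun x => ?_, ?_⟩
        · simp_rw [dirichletKernel_cons]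
          exact (ih (p - x) _ hs').1.const_mul _
        · simp_rw [dirichletKernel_cons, norm_mul, integral_const_mul,
            integral_norm_dirichletKernel, (ih _ _ hσ).2, ← norm_mul]
          exact (integrable_indicator_cpow_mul_indicator_cpow_sub (hs 0) hσT _ p).norm
      · exact ((measurable_dirichletKernel _ p s).comp (by fun_prop)).aestronglyMeasurable
    refine ⟨hint, ?_⟩
    rw [← integral_comp_finCons, Measure.volume_eq_prod,
      integral_prod _ (by rwa [← Measure.volume_eq_prod, integrable_comp_finCons_iff])]
    simp_rw [dirichletKernel_cons, integral_const_mul, (ih _ _ hs').2,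
      integral_indicator_cpow_mul_indicator_cpow_sub,
      Complex.prod_Gamma_div_Gamma_sum_eq_mul_betaIntegral s hs, Fin.sum_univ_succ s,
      add_sub_right_comm]
    rfl

/-- **Proposition 2 (Dirichlet-type simplex integral).**
For an integer `M = N + 1 ≥ 1`, a real `p > 0` and complex exponents `s₀, …, s_N` with
positive real parts, the integral over the open simplex
`{q ∈ (0,∞)^N : q₀ + ⋯ + q_{N-1} < p}` of
`(∏_m q_m^{s_m - 1}) · (p - Σ_m q_m)^{s_N - 1}`
equals `(∏_m Γ(s_m) / Γ(Σ_m s_m)) · p^{Σ_m s_m - 1}`.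
(For `N = 0`, i.e. `M = 1`, the left-hand side is the constant `p^{s₀ - 1}`.) -/
theorem dirichlet_simplex_integral
    (N : ℕ) (p : ℝ) (hp : 0 < p) (s : Fin (N + 1) → ℂ) (hs : ∀ m, 0 < (s m).re) :
    (∫ q : Fin N → ℝ in {q : Fin N → ℝ | (∀ m, 0 < q m) ∧ ∑ m, q m < p},
        (∏ m : Fin N, ((q m : ℝ) : ℂ) ^ (s m.castSucc - 1)) *
          (((p - ∑ m, q m : ℝ) : ℂ) ^ (s (Fin.last N) - 1))) =
      ((∏ m, Complex.Gamma (s m)) / Complex.Gamma (∑ m, s m)) *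
        ((p : ℝ) : ℂ) ^ ((∑ m, s m) - 1) := by
  have h := (integrable_dirichletKernel_and_integral_eq N p s hs).2
  rwa [indicator_of_mem (mem_Ioi.2 hp), dirichletKernel,
    integral_indicator (measurableSet_dirichletSimplex N p)] at h
end

section
/- Let M ≥ 1 be an integer, let ε₁, …, ε_M be real numbers with ε_m > 0 for all m, and let ε̃ be real with ε̃ + ε₁ + ⋯ + ε_M < -1. Then the function (x̃, x₁, …, x_M) ↦ e^{ε̃x̃ + Σ_{m=1}^M ε_m x_m} · (e^{x̃} - Σ_{m=1}^M e^{x_m} - 1)^+ is integrable on ℝ^{M+1} (belongs to L¹(ℝ^{M+1})). -/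
/-!
After the shear `x_m = u_m + x̃`, the payoff is `(e^{x̃}(1 - Σ_m e^{u_m}) - 1)⁺`. It vanishes unless
every `u_m ≤ 0` and `x̃ > 0`, and it never exceeds `e^{x̃}`. So the weighted payoff is dominated by
`∏_m 1_{u_m ≤ 0} e^{ε_m u_m} · 1_{x̃ > 0} e^{(ε̃ + Σ_m ε_m + 1) x̃}`, a product of integrable
functions of one variable each.
-/

open MeasureTheory Set Real

theorem measurePreserving_add_comp_snd {G H : Type*} [MeasurableSpace G] [MeasurableSpace H]
    [AddGroup G] [MeasurableAdd₂ G] (μ : Measure G) [μ.IsAddRightInvariant] [SFinite μ]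
    (ν : Measure H) [SFinite ν] {f : H → G} (hf : Measurable f) :
    MeasurePreserving (fun z : G × H => (z.1 + f z.2, z.2)) (μ.prod ν) (μ.prod ν) :=
  Measure.measurePreserving_swap.comp <|
    (MeasurePreserving.skew_product (g := fun y x => x + f y) (.id ν)
      (measurable_snd.add (hf.comp measurable_fst))
      (.of_forall fun y => map_add_right_eq_self μ (f y))).comp Measure.measurePreserving_swap

section SpreadPayoff

variable {ι : Type*} [Fintype ι]

theorem nonpos_and_pos_of_spread_payoff_pos {u : ι → ℝ} {y : ℝ}
    (h : 0 < exp y - ∑ i, exp (u i + y) - 1) : (∀ i, u i ≤ 0) ∧ 0 < y := by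
  have hsum_nonneg : 0 ≤ ∑ i, exp (u i + y) := Finset.sum_nonneg fun i _ => (exp_pos _).le
  refine ⟨fun i => ?_, exp_lt_exp.1 (by rw [exp_zero]; linarith)⟩
  have : exp (u i + y) < exp y := by
    linarith [Finset.single_le_sum (fun j _ => (exp_pos (u j + y)).le) (Finset.mem_univ i)]
  linarith [exp_lt_exp.1 this]

theorem weighted_spread_payoff_shear_le (ε : ι → ℝ) (εt : ℝ) (u : ι → ℝ) (y : ℝ) :
    exp (εt * y + ∑ i, ε i * (u i + y)) * max (exp y - ∑ i, exp (u i + y) - 1) 0 ≤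
      (∏ i, (Iic 0).indicator (fun t => exp (ε i * t)) (u i)) *
        (Ioi 0).indicator (fun t => exp ((εt + ∑ i, ε i + 1) * t)) y := by
  rcases le_or_gt (exp y - ∑ i, exp (u i + y) - 1) 0 with hout | hin
  · have hexp_indicator_nonneg (s : Set ℝ) (a t : ℝ) :
        0 ≤ s.indicator (fun t => exp (a * t)) t :=
      indicator_nonneg (fun t _ => (exp_pos (a * t)).le) t
    rw [max_eq_right hout, mul_zero]
    exact mul_nonneg (Finset.prod_nonneg fun i _ => hexp_indicator_nonneg _ _ _)
      (hexp_indicator_nonneg _ _ _)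
  obtain ⟨hu, hy⟩ := nonpos_and_pos_of_spread_payoff_pos hin
  simp only [indicator_of_mem (mem_Iic.2 (hu _)), indicator_of_mem (mem_Ioi.2 hy), ← exp_sum,
    ← exp_add, max_eq_left hin.le]
  calc exp (εt * y + ∑ i, ε i * (u i + y)) * (exp y - ∑ i, exp (u i + y) - 1)
      ≤ exp (εt * y + ∑ i, ε i * (u i + y)) * exp y := by
        gcongr
        linarith [Finset.sum_nonneg fun i (_ : i ∈ Finset.univ) => (exp_pos (u i + y)).le]
    _ = exp (∑ i, ε i * u i + (εt + ∑ i, ε i + 1) * y) := by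
      rw [← exp_add]
      simp only [mul_add, Finset.sum_add_distrib, ← Finset.sum_mul]
      ring_nf

end SpreadPayoff

theorem multiasset_spread_payoff_exp_weight_integrable_general
    (M : ℕ) (ε : Fin M → ℝ) (hε : ∀ m, 0 < ε m)
    (εt : ℝ) (hsum : εt + ∑ m, ε m < -1) :
    Integrable
      (fun x : (Fin M → ℝ) × ℝ =>
        Real.exp (εt * x.2 + ∑ m, ε m * x.1 m) *
          max (Real.exp x.2 - ∑ m, Real.exp (x.1 m) - 1) 0)
      (volume : Measure ((Fin M → ℝ) × ℝ)) := by
  have hshear := measurePreserving_add_comp_snd (volume : Measure (Fin M → ℝ))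
    (volume : Measure ℝ) (f := fun y _ => y) (by fun_prop)
  rw [Measure.volume_eq_prod, ← hshear.integrable_comp (by fun_prop)]
  have hdom : Integrable (fun x : (Fin M → ℝ) × ℝ =>
      (∏ m, (Iic 0).indicator (fun t => exp (ε m * t)) (x.1 m)) *
        (Ioi 0).indicator (fun t => exp ((εt + ∑ m, ε m + 1) * t)) x.2) (volume.prod volume) :=
    .mul_prod
      (.fintype_prod fun m =>
        (integrableOn_exp_mul_Iic (hε m) 0).integrable_indicator measurableSet_Iic)
      ((integrableOn_exp_mul_Ioi (by linarith) 0).integrable_indicator measurableSet_Ioi)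
  refine hdom.mono (by fun_prop) (.of_forall fun x => ?_)
  simp only [Function.comp_apply, Pi.add_apply, Real.norm_eq_abs]
  exact abs_le_abs_of_nonneg (by positivity) (weighted_spread_payoff_shear_le ε εt x.1 x.2)

/-- For `ε_m > 0` and `ε̃ + Σ_m ε_m < -1`, the function
`(x, x̃) ↦ e^{ε̃x̃ + Σ_m ε_m x_m} · (e^{x̃} - Σ_m e^{x_m} - 1)⁺` is in `L¹(ℝ^{M+1})`. -/
theorem multiasset_spread_payoff_exp_weight_integrable
    (M : ℕ) (hM : 1 ≤ M) (ε : Fin M → ℝ) (hε : ∀ m, 0 < ε m)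
    (εt : ℝ) (hsum : εt + ∑ m, ε m < -1) :
    Integrable
      (fun x : (Fin M → ℝ) × ℝ =>
        Real.exp (εt * x.2 + ∑ m, ε m * x.1 m) *
          max (Real.exp x.2 - ∑ m, Real.exp (x.1 m) - 1) 0)
      (volume : Measure ((Fin M → ℝ) × ℝ)) :=
  multiasset_spread_payoff_exp_weight_integrable_general M ε hε εt hsum
end

section
/- Let μ be a probability measure on ℝ² and let ε = (ε₁, ε₂) be real numbers with ε₂ > 0 and ε₁ + ε₂ < -1. Assume that (i) x ↦ e^{-ε₁x₁ - ε₂x₂} is μ-integrable, (ii) x ↦ (e^{x₁} - e^{x₂} - 1)^+ is μ-integrable, and (iii) v ↦ Φ(v+iε) · P̂(v+iε) is integrable on ℝ², where Φ(u) = ∫_{ℝ²} e^{i(u₁x₁ + u₂x₂)} dμ(x) for u ∈ ℂ² with Im(u₁) = ε₁, Im(u₂) = ε₂. Then ∫_{ℝ²} (e^{x₁} - e^{x₂} - 1)^+ dμ(x) = (2π)^{-2} ∫_{ℝ²} Φ(v₁+iε₁, v₂+iε₂) · P̂(v₁+iε₁, v₂+iε₂) dv₁ dv₂. -/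
/-!
Tilting `μ` by the density `e^{-ε₁x₁-ε₂x₂}` gives a finite measure `ν` whose characteristic
function is `v ↦ Φ(v + iε)`, while `P̂(v + iε)` is the Fourier transform of the damped payoff
`g(x) = e^{ε₁x₁+ε₂x₂} P(x)`, a bounded integrable function. That transform is computed by
integrating first in `x₁` (an elementary exponential integral) and then in `x₂`, where the
substitution `u = sigmoid x₂` produces a Beta integral. The formula is then Parseval's identity
`∫ ν̂ ĝ = (2π)² ∫ g dν`: inserting the Gaussian factor `e^{-r²|v|²/4}`, Fubini and the Fourier
transform of the Gaussian turn the left side into `4π ∫ (g ⋆ heat kernel) dν`, and both sides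
converge as `r → 0` by dominated convergence.
-/

open MeasureTheory Real Set Filter
open scoped Topology Complex

noncomputable section

namespace SpreadOption

def spreadPayoff (x : ℝ × ℝ) : ℝ := max (rexp x.1 - rexp x.2 - 1) 0

lemma spreadPayoff_nonneg (x : ℝ × ℝ) : 0 ≤ spreadPayoff x := le_max_right _ _

@[fun_prop]
lemma continuous_spreadPayoff : Continuous spreadPayoff := by
  unfold spreadPayoff; fun_prop

lemma spreadPayoff_le_exp_fst (x : ℝ × ℝ) : spreadPayoff x ≤ rexp x.1 :=
  max_le (by linarith [exp_pos x.2]) (exp_pos _).le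

lemma pos_and_lt_of_spreadPayoff_ne_zero {x : ℝ × ℝ} (h : spreadPayoff x ≠ 0) :
    0 < x.1 ∧ x.2 < x.1 := by
  have hpos : 0 < rexp x.1 - rexp x.2 - 1 := by
    by_contra! hle
    exact h (max_eq_right hle)
  exact ⟨one_lt_exp_iff.mp (by linarith [exp_pos x.2]), exp_lt_exp.mp (by linarith)⟩

lemma exp_mul_spreadPayoff_le {a b c : ℝ} (hc : 0 ≤ c) (hcb : c ≤ b) (hca : 2 * c ≤ -(1 + a + b))
    (x : ℝ × ℝ) :
    rexp (a * x.1 + b * x.2) * spreadPayoff x ≤ rexp (-c * |x.1|) * rexp (-c * |x.2|) := by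
  by_cases h : spreadPayoff x = 0
  · rw [h, mul_zero]; positivity
  obtain ⟨h1, h21⟩ := pos_and_lt_of_spreadPayoff_ne_zero h
  have habs : |x.2| ≤ 2 * x.1 - x.2 := abs_le.mpr ⟨by linarith, by linarith⟩
  calc rexp (a * x.1 + b * x.2) * spreadPayoff x ≤ rexp (a * x.1 + b * x.2) * rexp x.1 :=
        mul_le_mul_of_nonneg_left (spreadPayoff_le_exp_fst x) (exp_pos _).le
    _ ≤ rexp (-c * |x.1|) * rexp (-c * |x.2|) := by
        rw [← exp_add, ← exp_add, exp_le_exp, abs_of_pos h1]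
        nlinarith [mul_le_mul_of_nonneg_left habs hc,
          mul_nonneg (sub_nonneg.2 hcb) (sub_pos.2 h21).le,
          mul_nonneg (by linarith : 0 ≤ -(1 + a + b) - 2 * c) h1.le]

lemma exp_mul_spreadPayoff_le_one {a b : ℝ} (hb : 0 ≤ b) (hab : a + b ≤ -1) (x : ℝ × ℝ) :
    rexp (a * x.1 + b * x.2) * spreadPayoff x ≤ 1 := by
  simpa using exp_mul_spreadPayoff_le le_rfl hb (by linarith) x

lemma integrable_exp_neg_mul_abs {c : ℝ} (hc : 0 < c) :
    Integrable fun t : ℝ => rexp (-c * |t|) := by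
  rw [← integrableOn_univ, ← Iic_union_Ioi (a := 0)]
  refine IntegrableOn.union ?_ ?_
  · refine (integrableOn_exp_mul_Iic hc 0).congr_fun (fun t ht => ?_) measurableSet_Iic
    rw [abs_of_nonpos ht, neg_mul_neg]
  · refine (integrableOn_exp_mul_Ioi (neg_lt_zero.2 hc) 0).congr_fun (fun t ht => ?_)
      measurableSet_Ioi
    rw [abs_of_pos ht]

lemma integrable_exp_mul_spreadPayoff {a b : ℝ} (hb : 0 < b) (hab : a + b < -1) :
    Integrable fun x : ℝ × ℝ => rexp (a * x.1 + b * x.2) * spreadPayoff x := by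
  have hc : 0 < min b (-(1 + a + b) / 2) := lt_min hb (by linarith)
  refine ((integrable_exp_neg_mul_abs hc).mul_prod (integrable_exp_neg_mul_abs hc)).mono'
    (by fun_prop : Continuous _).aestronglyMeasurable (ae_of_all _ fun x => ?_)
  rw [norm_of_nonneg (mul_nonneg (exp_pos _).le (spreadPayoff_nonneg x))]
  exact exp_mul_spreadPayoff_le hc.le (min_le_left _ _)
    (by linarith [min_le_right b (-(1 + a + b) / 2)]) x

lemma ne_zero_of_re_lt_neg_one {s : ℂ} (hs : s.re < -1) : s ≠ 0 ∧ s + 1 ≠ 0 :=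
  ⟨fun h => by simp [h] at hs; linarith,
    fun h => by have := congrArg Complex.re h; simp at this; linarith⟩

lemma ofReal_cpow_of_pos {p : ℝ} (hp : 0 < p) (z : ℂ) : (p : ℂ) ^ z = cexp (z * (log p : ℝ)) := by
  rw [Complex.cpow_def_of_ne_zero (by exact_mod_cast hp.ne'), Complex.ofReal_log hp.le, mul_comm]

lemma integral_cexp_mul_max_exp_sub {s : ℂ} (hs : s.re < -1) {K : ℝ} (hK : 0 < K) :
    ∫ y : ℝ, cexp (s * y) * (max (rexp y - K) 0 : ℝ) = (K : ℂ) ^ (s + 1) / (s * (s + 1)) := by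
  obtain ⟨hs0, hs1⟩ := ne_zero_of_re_lt_neg_one hs
  have hind : (fun y : ℝ => cexp (s * y) * (max (rexp y - K) 0 : ℝ)) =
      (Ioi (log K)).indicator fun y => cexp ((s + 1) * y) - K * cexp (s * y) := by
    ext y
    by_cases hy : log K < y
    · rw [indicator_of_mem (show y ∈ Ioi (log K) from hy),
        max_eq_left (by linarith [(log_lt_iff_lt_exp hK).mp hy])]
      push_cast
      rw [add_mul, Complex.exp_add, one_mul]; ring
    · rw [indicator_of_notMem (show y ∉ Ioi (log K) from hy),
        max_eq_right (by linarith [(le_log_iff_exp_le hK).mp (not_lt.mp hy)])]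
      simp
  rw [hind, integral_indicator measurableSet_Ioi, integral_sub, integral_const_mul,
    integral_exp_mul_complex_Ioi (by simp; linarith), integral_exp_mul_complex_Ioi (by linarith),
    ← ofReal_cpow_of_pos hK, ← ofReal_cpow_of_pos hK,
    Complex.cpow_add _ _ (by exact_mod_cast hK.ne'), Complex.cpow_one]
  · field_simp
    ring
  · exact integrableOn_exp_mul_complex_Ioi (by simp; linarith) _
  · exact (integrableOn_exp_mul_complex_Ioi (by linarith) _).const_mul _

lemma sigmoid_eq_exp_div (y : ℝ) : sigmoid y = rexp y / (1 + rexp y) := by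
  rw [sigmoid_def, exp_neg]
  field_simp
  ring

lemma one_sub_sigmoid_eq (y : ℝ) : 1 - sigmoid y = (1 + rexp y)⁻¹ := by
  rw [sigmoid_eq_exp_div]
  field_simp
  ring

lemma integral_cexp_mul_one_add_exp_cpow {t w : ℂ} (ht : 0 < t.re) (hw : 0 < w.re) :
    ∫ y : ℝ, cexp (t * y) * ((1 + rexp y : ℝ) : ℂ) ^ (-(t + w)) =
      Complex.Gamma t * Complex.Gamma w / Complex.Gamma (t + w) := by
  rw [← Complex.betaIntegral_eq_Gamma_mul_div t w ht hw, Complex.betaIntegral,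
    intervalIntegral.integral_of_le zero_le_one, integral_Ioc_eq_integral_Ioo, ← range_sigmoid,
    ← image_univ, integral_image_eq_integral_abs_deriv_smul MeasurableSet.univ
      (fun y _ => (hasDerivAt_sigmoid y).hasDerivWithinAt) sigmoid_injective.injOn,
    setIntegral_univ]
  congr 1 with y
  have hD : 0 < 1 + rexp y := by positivity
  have hσ : 0 < sigmoid y := sigmoid_pos y
  have hσ' : 0 < 1 - sigmoid y := sub_pos.2 (sigmoid_lt_one y)
  have hlog : log (sigmoid y) = y - log (1 + rexp y) := by
    rw [sigmoid_eq_exp_div, log_div (exp_pos y).ne' hD.ne', log_exp]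
  have hlog' : log (1 - sigmoid y) = -log (1 + rexp y) := by
    rw [one_sub_sigmoid_eq, log_inv]
  have hexp {p : ℝ} (hp : 0 < p) : (p : ℂ) = cexp (log p : ℝ) := by
    rw [← Complex.ofReal_exp, exp_log hp]
  rw [abs_of_pos (mul_pos hσ hσ'), Complex.real_smul, ← Complex.ofReal_one, ← Complex.ofReal_sub,
    ofReal_cpow_of_pos hσ, ofReal_cpow_of_pos hσ', ofReal_cpow_of_pos hD, Complex.ofReal_mul,
    hexp hσ, hexp hσ', hlog, hlog', ← Complex.exp_add, ← Complex.exp_add, ← Complex.exp_add,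
    ← Complex.exp_add]
  congr 1
  push_cast
  ring

lemma Gamma_one_sub_eq {s : ℂ} (h0 : s ≠ 0) (h1 : s + 1 ≠ 0) :
    Complex.Gamma (1 - s) = s * (s + 1) * Complex.Gamma (-1 - s) := by
  rw [show 1 - s = -1 - s + 1 + 1 by ring,
    Complex.Gamma_add_one _ (by rw [show -1 - s + 1 = -s by ring]; exact neg_ne_zero.2 h0),
    Complex.Gamma_add_one _ (by rw [show -1 - s = -(s + 1) by ring]; exact neg_ne_zero.2 h1)]
  ring

theorem integral_cexp_mul_spreadPayoff {s t : ℂ} (ht : 0 < t.re) (hst : s.re + t.re < -1) :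
    ∫ x : ℝ × ℝ, cexp (s * x.1 + t * x.2) * spreadPayoff x =
      Complex.Gamma (-1 - s - t) * Complex.Gamma t / Complex.Gamma (1 - s) := by
  have hs : s.re < -1 := by linarith
  have hint : Integrable fun x : ℝ × ℝ => cexp (s * x.1 + t * x.2) * spreadPayoff x := by
    refine (integrable_exp_mul_spreadPayoff ht hst).mono'
      (by fun_prop : Continuous _).aestronglyMeasurable (ae_of_all _ fun x => ?_)
    simp [Complex.norm_exp, abs_of_nonneg (spreadPayoff_nonneg x)]
  -- the exponent is `s + 1`, written as `-(t + w)` with `w = -1 - s - t` for the Beta integral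
  have hinner (x₂ : ℝ) : ∫ x₁ : ℝ, cexp (s * x₁ + t * x₂) * spreadPayoff (x₁, x₂) =
      cexp (t * x₂) * ((1 + rexp x₂ : ℝ) : ℂ) ^ (-(t + (-1 - s - t))) * (s * (s + 1))⁻¹ := by
    have hP (x₁ : ℝ) : spreadPayoff (x₁, x₂) = max (rexp x₁ - (1 + rexp x₂)) 0 := by
      rw [spreadPayoff, sub_sub, add_comm (rexp x₂)]
    simp_rw [hP, Complex.exp_add, mul_comm (cexp (s * _)), mul_assoc]
    rw [integral_const_mul, integral_cexp_mul_max_exp_sub hs (by positivity)]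
    ring_nf
  rw [Measure.volume_eq_prod, integral_prod_symm _ hint]
  simp_rw [hinner]
  rw [integral_mul_const, integral_cexp_mul_one_add_exp_cpow ht (by simp; linarith)]
  obtain ⟨hs0, hs1⟩ := ne_zero_of_re_lt_neg_one hs
  have hΓ : Complex.Gamma (-1 - s) ≠ 0 := Complex.Gamma_ne_zero_of_re_pos (by simp; linarith)
  rw [add_sub_cancel, Gamma_one_sub_eq hs0 hs1]
  field_simp

def dot₂ (v x : ℝ × ℝ) : ℝ := v.1 * x.1 + v.2 * x.2

lemma exp_neg_mul_sq₂_eq {b : ℝ} (v : ℝ × ℝ) :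
    rexp (-b * (v.1 ^ 2 + v.2 ^ 2)) = rexp (-b * v.1 ^ 2) * rexp (-b * v.2 ^ 2) := by
  rw [← exp_add]; ring_nf

lemma integrable_exp_neg_mul_sq₂ {b : ℝ} (hb : 0 < b) :
    Integrable fun v : ℝ × ℝ => rexp (-b * (v.1 ^ 2 + v.2 ^ 2)) := by
  simp_rw [exp_neg_mul_sq₂_eq]
  exact (integrable_exp_neg_mul_sq hb).mul_prod (integrable_exp_neg_mul_sq hb)

lemma integral_exp_neg_sq₂ : ∫ w : ℝ × ℝ, rexp (-(w.1 ^ 2 + w.2 ^ 2)) = π := by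
  simp_rw [← neg_one_mul (_ + _), exp_neg_mul_sq₂_eq]
  rw [Measure.volume_eq_prod, integral_prod_mul (fun a : ℝ => rexp (-1 * a ^ 2))
    (fun a : ℝ => rexp (-1 * a ^ 2)), integral_gaussian, div_one, mul_self_sqrt pi_pos.le]

lemma integral_exp_neg_mul_sq₂_mul_cexp {r : ℝ} (hr : r ≠ 0) (z : ℝ × ℝ) :
    ∫ v : ℝ × ℝ, (rexp (-(r ^ 2 / 4) * (v.1 ^ 2 + v.2 ^ 2)) : ℂ) * cexp (dot₂ v z * Complex.I) =
      ((4 * π / r ^ 2 : ℝ) : ℂ) * rexp (-(z.1 ^ 2 + z.2 ^ 2) / r ^ 2) := by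
  set b : ℂ := ((r ^ 2 / 4 : ℝ) : ℂ)
  have hb : 0 < b.re := by simp only [b, Complex.ofReal_re]; positivity
  have hsplit (v : ℝ × ℝ) : (rexp (-(r ^ 2 / 4) * (v.1 ^ 2 + v.2 ^ 2)) : ℂ) *
      cexp (dot₂ v z * Complex.I) =
      (cexp (Complex.I * z.1 * v.1) * cexp (-b * v.1 ^ 2)) *
        (cexp (Complex.I * z.2 * v.2) * cexp (-b * v.2 ^ 2)) := by
    simp only [b, Complex.ofReal_exp, dot₂, ← Complex.exp_add]
    congr 1
    push_cast
    ring
  simp_rw [hsplit]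
  rw [Measure.volume_eq_prod, integral_prod_mul
    (fun a : ℝ => cexp (Complex.I * z.1 * a) * cexp (-b * a ^ 2))
    (fun a : ℝ => cexp (Complex.I * z.2 * a) * cexp (-b * a ^ 2)),
    fourierIntegral_gaussian hb, fourierIntegral_gaussian hb]
  have hπb : ((π : ℂ) / b) ^ (1 / 2 : ℂ) * ((π : ℂ) / b) ^ (1 / 2 : ℂ) = π / b := by
    rw [← Complex.cpow_add _ _ (div_ne_zero (by exact_mod_cast pi_ne_zero)
      (by simp only [b]; exact_mod_cast (by positivity : r ^ 2 / 4 ≠ 0)))]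
    norm_num
  calc _ = ((π : ℂ) / b) ^ (1 / 2 : ℂ) * ((π : ℂ) / b) ^ (1 / 2 : ℂ) *
        (cexp (-(z.1 : ℂ) ^ 2 / (4 * b)) * cexp (-(z.2 : ℂ) ^ 2 / (4 * b))) := by ring
    _ = _ := by
      rw [hπb, ← Complex.exp_add, Complex.ofReal_exp]
      simp only [b]
      push_cast
      field_simp
      ring_nf

@[fun_prop]
lemma Continuous.dot₂ {α : Type*} [TopologicalSpace α] {f g : α → ℝ × ℝ} (hf : Continuous f)
    (hg : Continuous g) : Continuous fun a => dot₂ (f a) (g a) := by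
  unfold SpreadOption.dot₂; fun_prop

lemma dot₂_sub (v x y : ℝ × ℝ) : dot₂ v (x - y) = dot₂ v x - dot₂ v y := by
  simp only [dot₂, Prod.fst_sub, Prod.snd_sub]; ring

def fourier₂ (g : ℝ × ℝ → ℂ) (v : ℝ × ℝ) : ℂ := ∫ x, cexp (-(dot₂ v x * Complex.I)) * g x

def charFun₂ (ν : Measure (ℝ × ℝ)) (v : ℝ × ℝ) : ℂ := ∫ x, cexp (dot₂ v x * Complex.I) ∂ν

def gaussSmooth (g : ℝ × ℝ → ℂ) (r : ℝ) (x : ℝ × ℝ) : ℂ :=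
  ∫ w : ℝ × ℝ, (rexp (-(w.1 ^ 2 + w.2 ^ 2)) : ℂ) * g (x - r • w)

lemma norm_cexp_neg_dot₂_mul_I (v x : ℝ × ℝ) : ‖cexp (-(dot₂ v x * Complex.I))‖ = 1 := by
  rw [← neg_mul, ← Complex.ofReal_neg, Complex.norm_exp_ofReal_mul_I]

variable {g : ℝ × ℝ → ℂ}

lemma continuous_fourier₂ (hg : Integrable g) : Continuous (fourier₂ g) :=
  continuous_of_dominated
    (fun v => ((by fun_prop : Continuous fun x => cexp (-(dot₂ v x * Complex.I))
      ).aestronglyMeasurable.mul hg.aestronglyMeasurable))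
    (fun v => ae_of_all _ fun x => by rw [norm_mul, norm_cexp_neg_dot₂_mul_I, one_mul])
    hg.norm (ae_of_all _ fun x => by fun_prop)

lemma norm_fourier₂_le (v : ℝ × ℝ) : ‖fourier₂ g v‖ ≤ ∫ x, ‖g x‖ :=
  (norm_integral_le_integral_norm _).trans_eq <| by
    simp_rw [norm_mul, norm_cexp_neg_dot₂_mul_I, one_mul]

lemma integral_heatKernel_mul {r : ℝ} (hr : r ≠ 0) (x : ℝ × ℝ) :
    ∫ y : ℝ × ℝ, (rexp (-((x - y).1 ^ 2 + (x - y).2 ^ 2) / r ^ 2) : ℂ) * g y =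
      (r ^ 2 : ℝ) * gaussSmooth g r x := by
  set h : ℝ × ℝ → ℂ := fun z => (rexp (-(z.1 ^ 2 + z.2 ^ 2) / r ^ 2) : ℂ) * g (x - z)
  have hsub : ∫ y, h (x - y) = ∫ z, h z := integral_sub_left_eq_self h volume x
  have hscale := Measure.integral_comp_smul volume h r
  simp only [h, sub_sub_cancel] at hsub
  have hsmooth : gaussSmooth g r x = ∫ w, h (r • w) := by
    refine integral_congr_ae (ae_of_all _ fun w => ?_)
    simp only [h, Prod.smul_fst, Prod.smul_snd, smul_eq_mul]
    congr 3
    field_simp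
  rw [hsub, hsmooth, hscale, Module.finrank_prod, Module.finrank_self, abs_inv, abs_pow,
    Complex.real_smul, ← mul_assoc, ← Complex.ofReal_mul, one_add_one_eq_two, sq_abs,
    mul_inv_cancel₀ (pow_ne_zero 2 hr), Complex.ofReal_one, one_mul]

lemma integral_gaussian_mul_fourier₂_mul_cexp (hg : Integrable g) {r : ℝ} (hr : r ≠ 0)
    (x : ℝ × ℝ) :
    ∫ v : ℝ × ℝ, (rexp (-(r ^ 2 / 4) * (v.1 ^ 2 + v.2 ^ 2)) : ℂ) * fourier₂ g v *
        cexp (dot₂ v x * Complex.I) = 4 * π * gaussSmooth g r x := by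
  set G : ℝ × ℝ → ℂ := fun v => rexp (-(r ^ 2 / 4) * (v.1 ^ 2 + v.2 ^ 2))
  have hF : Integrable (Function.uncurry fun v y : ℝ × ℝ =>
      G v * (cexp (-(dot₂ v y * Complex.I)) * g y) * cexp (dot₂ v x * Complex.I))
      (volume.prod volume) := by
    refine ((integrable_exp_neg_mul_sq₂ (by positivity : 0 < r ^ 2 / 4)).mul_prod hg.norm).mono'
      ?_ (ae_of_all _ fun ⟨v, y⟩ => ?_)
    · have hc : Continuous fun p : (ℝ × ℝ) × (ℝ × ℝ) =>
          G p.1 * cexp (-(dot₂ p.1 p.2 * Complex.I)) * cexp (dot₂ p.1 x * Complex.I) := by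
        fun_prop
      refine (hc.aestronglyMeasurable.mul hg.aestronglyMeasurable.comp_snd).congr
        (ae_of_all _ fun ⟨v, y⟩ => by
          simp only [Function.uncurry_apply_pair, Pi.mul_apply]; ring)
    · simp only [Function.uncurry_apply_pair, G, norm_mul, norm_cexp_neg_dot₂_mul_I,
        Complex.norm_exp_ofReal_mul_I, Complex.norm_real, norm_of_nonneg (exp_pos _).le, mul_one,
        one_mul, le_refl]
  calc ∫ v, G v * fourier₂ g v * cexp (dot₂ v x * Complex.I)
      = ∫ v, ∫ y, G v * (cexp (-(dot₂ v y * Complex.I)) * g y) *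
          cexp (dot₂ v x * Complex.I) := by
        simp_rw [fourier₂, ← integral_const_mul, ← integral_mul_const]
    _ = ∫ y, ∫ v, G v * (cexp (-(dot₂ v y * Complex.I)) * g y) *
          cexp (dot₂ v x * Complex.I) :=
        integral_integral_swap hF
    _ = ∫ y, ((4 * π / r ^ 2 : ℝ) : ℂ) *
          ((rexp (-((x - y).1 ^ 2 + (x - y).2 ^ 2) / r ^ 2) : ℂ) * g y) := by
        refine integral_congr_ae (ae_of_all _ fun y => ?_)
        have hpt (v : ℝ × ℝ) : G v * (cexp (-(dot₂ v y * Complex.I)) * g y) *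
            cexp (dot₂ v x * Complex.I) = G v * cexp (dot₂ v (x - y) * Complex.I) * g y := by
          rw [dot₂_sub, Complex.ofReal_sub, sub_mul, Complex.exp_sub, Complex.exp_neg]
          ring
        simp_rw [hpt]
        rw [integral_mul_const, integral_exp_neg_mul_sq₂_mul_cexp hr, mul_assoc]
    _ = 4 * π * gaussSmooth g r x := by
        rw [integral_const_mul, integral_heatKernel_mul hr, ← mul_assoc, ← Complex.ofReal_mul,
          div_mul_cancel₀ _ (pow_ne_zero 2 hr)]
        push_cast
        ring

lemma integrable_exp_neg_sq₂ : Integrable fun w : ℝ × ℝ => rexp (-(w.1 ^ 2 + w.2 ^ 2)) := by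
  simpa using integrable_exp_neg_mul_sq₂ one_pos

lemma norm_exp_neg_sq₂_mul_le {C : ℝ} (hC : ∀ x, ‖g x‖ ≤ C) (w y : ℝ × ℝ) :
    ‖(rexp (-(w.1 ^ 2 + w.2 ^ 2)) : ℂ) * g y‖ ≤ rexp (-(w.1 ^ 2 + w.2 ^ 2)) * C := by
  rw [norm_mul, Complex.norm_real, norm_of_nonneg (exp_pos _).le]
  exact mul_le_mul_of_nonneg_left (hC y) (exp_pos _).le

lemma norm_gaussSmooth_le {C : ℝ} (hC : ∀ x, ‖g x‖ ≤ C) (r : ℝ) (x : ℝ × ℝ) :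
    ‖gaussSmooth g r x‖ ≤ π * C := by
  calc ‖gaussSmooth g r x‖ ≤ ∫ w : ℝ × ℝ, rexp (-(w.1 ^ 2 + w.2 ^ 2)) * C :=
        norm_integral_le_of_norm_le (integrable_exp_neg_sq₂.mul_const C)
          (ae_of_all _ fun w => norm_exp_neg_sq₂_mul_le hC w _)
    _ = π * C := by rw [integral_mul_const, integral_exp_neg_sq₂]

lemma continuous_gaussSmooth (hgc : Continuous g) {C : ℝ} (hC : ∀ x, ‖g x‖ ≤ C) (r : ℝ) :
    Continuous (gaussSmooth g r) :=
  continuous_of_dominated (fun x => (by fun_prop : Continuous _).aestronglyMeasurable)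
    (fun x => ae_of_all _ fun w => norm_exp_neg_sq₂_mul_le hC w _)
    (integrable_exp_neg_sq₂.mul_const C) (ae_of_all _ fun w => by fun_prop)

lemma tendsto_gaussSmooth (hgc : Continuous g) {C : ℝ} (hC : ∀ x, ‖g x‖ ≤ C) (x : ℝ × ℝ) :
    Tendsto (fun r => gaussSmooth g r x) (𝓝 0) (𝓝 (π * g x)) := by
  have hlim :
      ∫ w : ℝ × ℝ, (rexp (-(w.1 ^ 2 + w.2 ^ 2)) : ℂ) * g (x - (0 : ℝ) • w) = π * g x := by
    simp_rw [zero_smul, sub_zero]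
    rw [integral_mul_const, integral_complex_ofReal, integral_exp_neg_sq₂]
  rw [← hlim]
  exact tendsto_integral_filter_of_dominated_convergence _
    (Eventually.of_forall fun r => (by fun_prop : Continuous _).aestronglyMeasurable)
    (Eventually.of_forall fun r => ae_of_all _ fun w => norm_exp_neg_sq₂_mul_le hC w _)
    (integrable_exp_neg_sq₂.mul_const C)
    (ae_of_all _ fun w => (by fun_prop : Continuous fun r : ℝ => _).tendsto 0)

variable {ν : Measure (ℝ × ℝ)} [IsFiniteMeasure ν]

lemma integral_gaussian_mul_charFun₂_mul_fourier₂ (hg : Integrable g) {r : ℝ} (hr : r ≠ 0) :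
    ∫ v : ℝ × ℝ, (rexp (-(r ^ 2 / 4) * (v.1 ^ 2 + v.2 ^ 2)) : ℂ) * (charFun₂ ν v * fourier₂ g v) =
      4 * π * ∫ x, gaussSmooth g r x ∂ν := by
  set G : ℝ × ℝ → ℂ := fun v => rexp (-(r ^ 2 / 4) * (v.1 ^ 2 + v.2 ^ 2))
  have hF : Integrable (Function.uncurry fun v x : ℝ × ℝ =>
      G v * fourier₂ g v * cexp (dot₂ v x * Complex.I)) (volume.prod ν) := by
    have hc := continuous_fourier₂ hg
    refine (((integrable_exp_neg_mul_sq₂ (by positivity : 0 < r ^ 2 / 4)).mul_const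
      (∫ y, ‖g y‖)).mul_prod (integrable_const (1 : ℝ))).mono'
      (by fun_prop : Continuous _).aestronglyMeasurable (ae_of_all _ fun ⟨v, x⟩ => ?_)
    simp only [Function.uncurry_apply_pair, G, norm_mul, Complex.norm_exp_ofReal_mul_I,
      Complex.norm_real, norm_of_nonneg (exp_pos _).le, mul_one]
    exact mul_le_mul_of_nonneg_left (norm_fourier₂_le v) (exp_pos _).le
  calc ∫ v, G v * (charFun₂ ν v * fourier₂ g v)
      = ∫ v, ∫ x, G v * fourier₂ g v * cexp (dot₂ v x * Complex.I) ∂ν := by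
        refine integral_congr_ae (ae_of_all _ fun v => ?_)
        simp only [G, charFun₂]
        rw [← integral_mul_const, ← integral_const_mul]
        congr with x
        ring
    _ = ∫ x, (∫ v, G v * fourier₂ g v * cexp (dot₂ v x * Complex.I)) ∂ν :=
        integral_integral_swap hF
    _ = 4 * π * ∫ x, gaussSmooth g r x ∂ν := by
        simp_rw [G, integral_gaussian_mul_fourier₂_mul_cexp hg hr, integral_const_mul]

theorem integral_charFun₂_mul_fourier₂ (hg : Integrable g) (hgc : Continuous g) {C : ℝ}
    (hC : ∀ x, ‖g x‖ ≤ C) (h : Integrable fun v => charFun₂ ν v * fourier₂ g v) :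
    ∫ v, charFun₂ ν v * fourier₂ g v = (2 * π) ^ 2 * ∫ x, g x ∂ν := by
  have hG (r : ℝ) (v : ℝ × ℝ) : ‖(rexp (-(r ^ 2 / 4) * (v.1 ^ 2 + v.2 ^ 2)) : ℂ)‖ ≤ 1 := by
    rw [Complex.norm_real, norm_of_nonneg (exp_pos _).le, exp_le_one_iff]
    exact mul_nonpos_of_nonpos_of_nonneg (neg_nonpos.2 (by positivity)) (by positivity)
  have hlhs : Tendsto (fun r : ℝ => ∫ v : ℝ × ℝ,
      (rexp (-(r ^ 2 / 4) * (v.1 ^ 2 + v.2 ^ 2)) : ℂ) * (charFun₂ ν v * fourier₂ g v))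
      (𝓝 0) (𝓝 (∫ v, charFun₂ ν v * fourier₂ g v)) := by
    refine tendsto_integral_filter_of_dominated_convergence _
      (Eventually.of_forall fun r => (by fun_prop : Continuous _).aestronglyMeasurable.mul
        h.aestronglyMeasurable)
      (Eventually.of_forall fun r => ae_of_all _ fun v => ?_) h.norm
      (ae_of_all _ fun v => ?_)
    · rw [norm_mul]
      exact mul_le_of_le_one_left (norm_nonneg _) (hG r v)
    · simpa using ((by fun_prop : Continuous fun r : ℝ =>
        (rexp (-(r ^ 2 / 4) * (v.1 ^ 2 + v.2 ^ 2)) : ℂ)).tendsto 0).mul_const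
        (charFun₂ ν v * fourier₂ g v)
  have hrhs : Tendsto (fun r : ℝ => ∫ x, gaussSmooth g r x ∂ν) (𝓝 0) (𝓝 (∫ x, π * g x ∂ν)) :=
    tendsto_integral_filter_of_dominated_convergence _
      (Eventually.of_forall fun r => (continuous_gaussSmooth hgc hC r).aestronglyMeasurable)
      (Eventually.of_forall fun r => ae_of_all _ (norm_gaussSmooth_le hC r))
      (integrable_const _) (ae_of_all _ (tendsto_gaussSmooth hgc hC))
  have heq : ∫ v, charFun₂ ν v * fourier₂ g v = 4 * π * ∫ x, π * g x ∂ν :=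
    tendsto_nhds_unique (hlhs.mono_left (nhdsWithin_le_nhds (s := {0}ᶜ)))
      (((hrhs.const_mul (4 * π : ℂ)).mono_left nhdsWithin_le_nhds).congr'
        (eventually_nhdsWithin_of_forall fun r (hr : r ∈ {0}ᶜ) =>
          (integral_gaussian_mul_charFun₂_mul_fourier₂ hg hr).symm))
  rw [heq, integral_const_mul]
  ring

lemma fourier₂_exp_mul_spreadPayoff {ε₁ ε₂ : ℝ} (hε₂ : 0 < ε₂) (hε : ε₁ + ε₂ < -1)
    (v : ℝ × ℝ) :
    fourier₂ (fun x => ((rexp (ε₁ * x.1 + ε₂ * x.2) * spreadPayoff x : ℝ) : ℂ)) v =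
      Complex.Gamma
          (Complex.I * (((v.1 : ℂ) + Complex.I * ε₁) + ((v.2 : ℂ) + Complex.I * ε₂)) - 1) *
        Complex.Gamma (-Complex.I * ((v.2 : ℂ) + Complex.I * ε₂)) /
        Complex.Gamma (Complex.I * ((v.1 : ℂ) + Complex.I * ε₁) + 1) := by
  set s : ℂ := ε₁ - v.1 * Complex.I
  set t : ℂ := ε₂ - v.2 * Complex.I
  have hw : Complex.I * (((v.1 : ℂ) + Complex.I * ε₁) + ((v.2 : ℂ) + Complex.I * ε₂)) - 1 =
      -1 - s - t := by linear_combination (ε₁ + ε₂ : ℂ) * Complex.I_sq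
  have ht : -Complex.I * ((v.2 : ℂ) + Complex.I * ε₂) = t := by
    linear_combination -(ε₂ : ℂ) * Complex.I_sq
  have hs : Complex.I * ((v.1 : ℂ) + Complex.I * ε₁) + 1 = 1 - s := by
    linear_combination (ε₁ : ℂ) * Complex.I_sq
  rw [hw, ht, hs, ← integral_cexp_mul_spreadPayoff (by simpa [t] using hε₂)
    (by simpa [s, t] using hε)]
  refine integral_congr_ae (ae_of_all _ fun x => ?_)
  simp only [dot₂, Complex.ofReal_mul, Complex.ofReal_exp, ← mul_assoc, ← Complex.exp_add]
  congr 2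
  push_cast
  ring

lemma integral_withDensity_ofReal_exp (μ : Measure (ℝ × ℝ)) (ε₁ ε₂ : ℝ) (f : ℝ × ℝ → ℂ) :
    ∫ x, f x ∂μ.withDensity (fun x => ENNReal.ofReal (rexp (-ε₁ * x.1 - ε₂ * x.2))) =
      ∫ x, (rexp (-ε₁ * x.1 - ε₂ * x.2) : ℂ) * f x ∂μ := by
  rw [integral_withDensity_eq_integral_toReal_smul (by fun_prop)
    (ae_of_all _ fun _ => ENNReal.ofReal_lt_top)]
  simp_rw [ENNReal.toReal_ofReal (exp_pos _).le, Complex.real_smul]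

lemma charFun₂_withDensity_exp (μ : Measure (ℝ × ℝ)) (ε₁ ε₂ : ℝ) (v : ℝ × ℝ) :
    charFun₂ (μ.withDensity fun x => ENNReal.ofReal (rexp (-ε₁ * x.1 - ε₂ * x.2))) v =
      ∫ x : ℝ × ℝ, cexp (Complex.I *
        (((v.1 : ℂ) + Complex.I * ε₁) * x.1 + ((v.2 : ℂ) + Complex.I * ε₂) * x.2)) ∂μ := by
  rw [charFun₂, integral_withDensity_ofReal_exp]
  refine integral_congr_ae (ae_of_all _ fun x => ?_)
  dsimp only
  rw [Complex.ofReal_exp, ← Complex.exp_add, dot₂]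
  congr 1
  push_cast
  linear_combination -(ε₁ * x.1 + ε₂ * x.2 : ℂ) * Complex.I_sq

lemma integral_exp_mul_spreadPayoff_withDensity_exp (μ : Measure (ℝ × ℝ)) (ε₁ ε₂ : ℝ) :
    ∫ x, ((rexp (ε₁ * x.1 + ε₂ * x.2) * spreadPayoff x : ℝ) : ℂ)
        ∂μ.withDensity (fun x => ENNReal.ofReal (rexp (-ε₁ * x.1 - ε₂ * x.2))) =
      ((∫ x, spreadPayoff x ∂μ : ℝ) : ℂ) := by
  rw [integral_withDensity_ofReal_exp, ← integral_complex_ofReal]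
  refine integral_congr_ae (ae_of_all _ fun x => ?_)
  dsimp only
  rw [← Complex.ofReal_mul, ← mul_assoc, ← exp_add,
    show -ε₁ * x.1 - ε₂ * x.2 + (ε₁ * x.1 + ε₂ * x.2) = 0 by ring, exp_zero, one_mul]

end SpreadOption

end

open SpreadOption in
theorem spread_option_price_formula_general
    (μ : Measure (ℝ × ℝ)) [IsProbabilityMeasure μ]
    (ε₁ ε₂ : ℝ) (hε₂ : 0 < ε₂) (hε : ε₁ + ε₂ < -1)
    (h₁ : Integrable (fun x : ℝ × ℝ => Real.exp (-ε₁ * x.1 - ε₂ * x.2)) μ)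
    (h₃ : Integrable
      (fun v : ℝ × ℝ =>
        (∫ x : ℝ × ℝ,
            Complex.exp (Complex.I *
              (((v.1 : ℂ) + Complex.I * (ε₁ : ℂ)) * (x.1 : ℂ) +
                ((v.2 : ℂ) + Complex.I * (ε₂ : ℂ)) * (x.2 : ℂ))) ∂μ) *
          (Complex.Gamma
              (Complex.I *
                  (((v.1 : ℂ) + Complex.I * (ε₁ : ℂ)) + ((v.2 : ℂ) + Complex.I * (ε₂ : ℂ))) - 1) *
            Complex.Gamma (-Complex.I * ((v.2 : ℂ) + Complex.I * (ε₂ : ℂ))) /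
            Complex.Gamma (Complex.I * ((v.1 : ℂ) + Complex.I * (ε₁ : ℂ)) + 1)))
      (volume : Measure (ℝ × ℝ))) :
    ((∫ x : ℝ × ℝ, max (Real.exp x.1 - Real.exp x.2 - 1) 0 ∂μ : ℝ) : ℂ) =
      ((2 * Real.pi : ℂ) ^ 2)⁻¹ *
        ∫ v : ℝ × ℝ,
          (∫ x : ℝ × ℝ,
              Complex.exp (Complex.I *
                (((v.1 : ℂ) + Complex.I * (ε₁ : ℂ)) * (x.1 : ℂ) +
                  ((v.2 : ℂ) + Complex.I * (ε₂ : ℂ)) * (x.2 : ℂ))) ∂μ) *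
            (Complex.Gamma
                (Complex.I *
                    (((v.1 : ℂ) + Complex.I * (ε₁ : ℂ)) + ((v.2 : ℂ) + Complex.I * (ε₂ : ℂ))) - 1) *
              Complex.Gamma (-Complex.I * ((v.2 : ℂ) + Complex.I * (ε₂ : ℂ))) /
              Complex.Gamma (Complex.I * ((v.1 : ℂ) + Complex.I * (ε₁ : ℂ)) + 1)) := by
  have : IsFiniteMeasure (μ.withDensity fun x => ENNReal.ofReal (rexp (-ε₁ * x.1 - ε₂ * x.2))) :=
    isFiniteMeasure_withDensity_ofReal h₁.2
  simp_rw [← charFun₂_withDensity_exp, ← fourier₂_exp_mul_spreadPayoff hε₂ hε] at h₃ ⊢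
  have hg_le (x : ℝ × ℝ) : ‖((rexp (ε₁ * x.1 + ε₂ * x.2) * spreadPayoff x : ℝ) : ℂ)‖ ≤ 1 := by
    rw [Complex.norm_real, norm_of_nonneg (mul_nonneg (exp_pos _).le (spreadPayoff_nonneg x))]
    exact exp_mul_spreadPayoff_le_one hε₂.le (by linarith) x
  have hg : Integrable fun x : ℝ × ℝ => ((rexp (ε₁ * x.1 + ε₂ * x.2) * spreadPayoff x : ℝ) : ℂ) :=
    (integrable_exp_mul_spreadPayoff hε₂ hε).ofReal
  rw [integral_charFun₂_mul_fourier₂ hg (by fun_prop) hg_le h₃,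
    integral_exp_mul_spreadPayoff_withDensity_exp, inv_mul_cancel_left₀ (by simp [pi_ne_zero])]
  rfl

/-- **Spread option pricing formula.** For a probability measure μ on ℝ² and ε₂ > 0,
ε₁ + ε₂ < -1, under the stated integrability hypotheses, the expectation of the spread
payoff equals `(2π)^{-2}` times the integral of the characteristic function `Φ` against
`P̂` along the shifted contour. -/
theorem spread_option_price_formula
    (μ : Measure (ℝ × ℝ)) [IsProbabilityMeasure μ]
    (ε₁ ε₂ : ℝ) (hε₂ : 0 < ε₂) (hε : ε₁ + ε₂ < -1)
    (h₁ : Integrable (fun x : ℝ × ℝ => Real.exp (-ε₁ * x.1 - ε₂ * x.2)) μ)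
    (h₂ : Integrable (fun x : ℝ × ℝ => max (Real.exp x.1 - Real.exp x.2 - 1) 0) μ)
    (h₃ : Integrable
      (fun v : ℝ × ℝ =>
        (∫ x : ℝ × ℝ,
            Complex.exp (Complex.I *
              (((v.1 : ℂ) + Complex.I * (ε₁ : ℂ)) * (x.1 : ℂ) +
                ((v.2 : ℂ) + Complex.I * (ε₂ : ℂ)) * (x.2 : ℂ))) ∂μ) *
          (Complex.Gamma
              (Complex.I *
                  (((v.1 : ℂ) + Complex.I * (ε₁ : ℂ)) + ((v.2 : ℂ) + Complex.I * (ε₂ : ℂ))) - 1) *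
            Complex.Gamma (-Complex.I * ((v.2 : ℂ) + Complex.I * (ε₂ : ℂ))) /
            Complex.Gamma (Complex.I * ((v.1 : ℂ) + Complex.I * (ε₁ : ℂ)) + 1)))
      (volume : Measure (ℝ × ℝ))) :
    ((∫ x : ℝ × ℝ, max (Real.exp x.1 - Real.exp x.2 - 1) 0 ∂μ : ℝ) : ℂ) =
      ((2 * Real.pi : ℂ) ^ 2)⁻¹ *
        ∫ v : ℝ × ℝ,
          (∫ x : ℝ × ℝ,
              Complex.exp (Complex.I *
                (((v.1 : ℂ) + Complex.I * (ε₁ : ℂ)) * (x.1 : ℂ) +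
                  ((v.2 : ℂ) + Complex.I * (ε₂ : ℂ)) * (x.2 : ℂ))) ∂μ) *
            (Complex.Gamma
                (Complex.I *
                    (((v.1 : ℂ) + Complex.I * (ε₁ : ℂ)) + ((v.2 : ℂ) + Complex.I * (ε₂ : ℂ))) - 1) *
              Complex.Gamma (-Complex.I * ((v.2 : ℂ) + Complex.I * (ε₂ : ℂ))) /
              Complex.Gamma (Complex.I * ((v.1 : ℂ) + Complex.I * (ε₁ : ℂ)) + 1)) :=
  spread_option_price_formula_general μ ε₁ ε₂ hε₂ hε h₁ h₃
end

section
/- Let ε = (ε₁, ε₂) be real numbers with ε₂ > 0 and ε₁ + ε₂ < -1. Then the function x = (x₁,x₂) ↦ e^{ε₁x₁ + ε₂x₂} · (e^{x₁} - e^{x₂} - 1)^+ is bounded on ℝ² and tends to 0 as ‖x‖ → ∞. -/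
/-!
On the support of the payoff we have `x₂ < x₁` and `0 < x₁`, and bounding the payoff by
`e^{x₁}` turns the weighted payoff into `exp (-η x₁ - ε₂ (x₁ - x₂))` with
`η = -(ε₁ + ε₂ + 1) > 0`. Both `x₁` and `x₁ - x₂` are nonnegative there and
`‖x‖ ≤ x₁ + (x₁ - x₂)`, so the function is dominated by `exp (-δ ‖x‖)` with `δ = min η ε₂ > 0`.
-/

open Filter Real Topology

lemma norm_prod_le_two_mul_sub {a b : ℝ} (ha : 0 ≤ a) (hba : b ≤ a) :
    ‖((a, b) : ℝ × ℝ)‖ ≤ 2 * a - b := by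
  rw [Prod.norm_def, Real.norm_eq_abs, Real.norm_eq_abs]
  exact max_le (by rw [abs_of_nonneg ha]; linarith) (abs_le.mpr ⟨by linarith, by linarith⟩)

lemma abs_exp_mul_spread_payoff_le_exp_neg_mul_norm {ε₁ ε₂ δ : ℝ} (hδ : 0 ≤ δ)
    (hδη : δ ≤ -(ε₁ + ε₂ + 1)) (hδε₂ : δ ≤ ε₂) (x : ℝ × ℝ) :
    |exp (ε₁ * x.1 + ε₂ * x.2) * max (exp x.1 - exp x.2 - 1) 0| ≤ exp (-δ * ‖x‖) := by
  obtain ⟨a, b⟩ := x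
  rcases le_or_gt (exp a - exp b - 1) 0 with hzero | hpos
  · simp only [max_eq_right hzero, mul_zero, abs_zero]
    positivity
  have ha : 0 < a := Real.one_lt_exp_iff.mp (by linarith [exp_pos b])
  have hba : b < a := exp_lt_exp.mp (by linarith)
  rw [max_eq_left hpos.le, abs_of_pos (mul_pos (exp_pos _) hpos)]
  calc exp (ε₁ * a + ε₂ * b) * (exp a - exp b - 1)
      ≤ exp (ε₁ * a + ε₂ * b) * exp a := by gcongr; linarith [exp_pos b]
    _ = exp ((ε₁ + ε₂ + 1) * a - ε₂ * (a - b)) := by rw [← exp_add]; ring_nf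
    _ ≤ exp (-δ * (2 * a - b)) := by
        gcongr
        linarith [mul_le_mul_of_nonneg_left hδη ha.le,
          mul_le_mul_of_nonneg_left hδε₂ (sub_nonneg.mpr hba.le)]
    _ ≤ exp (-δ * ‖((a, b) : ℝ × ℝ)‖) := by
        rw [exp_le_exp, neg_mul, neg_mul, neg_le_neg_iff]
        exact mul_le_mul_of_nonneg_left (norm_prod_le_two_mul_sub ha.le hba.le) hδ

lemma bounded_and_tendsto_zero_of_abs_le_exp_neg_mul_norm {E : Type*} [NormedAddCommGroup E]
    [ProperSpace E] {f : E → ℝ} {δ : ℝ} (hδ : 0 < δ) (hf : ∀ x, |f x| ≤ exp (-δ * ‖x‖)) :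
    (∃ C : ℝ, ∀ x, |f x| ≤ C) ∧ Tendsto f (cocompact E) (𝓝 0) := by
  refine ⟨⟨1, fun x => (hf x).trans (exp_le_one_iff.mpr ?_)⟩, ?_⟩
  · nlinarith [norm_nonneg x]
  have hdecay : Tendsto (fun x : E => exp (-δ * ‖x‖)) (cocompact E) (𝓝 0) :=
    tendsto_exp_atBot.comp ((tendsto_const_mul_atBot_of_neg (neg_lt_zero.mpr hδ)).mpr
      tendsto_norm_cocompact_atTop)
  exact squeeze_zero_norm (fun x => (Real.norm_eq_abs _).trans_le (hf x)) hdecay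

/-- For ε₂ > 0 and ε₁ + ε₂ < -1, the function
`x ↦ e^{ε₁x₁ + ε₂x₂} · (e^{x₁} - e^{x₂} - 1)⁺` is bounded on ℝ² and tends to 0
as `‖x‖ → ∞`. -/
theorem spread_payoff_exp_weight_bounded_vanishing
    (ε₁ ε₂ : ℝ) (hε₂ : 0 < ε₂) (hε : ε₁ + ε₂ < -1) :
    (∃ C : ℝ, ∀ x : ℝ × ℝ,
        |Real.exp (ε₁ * x.1 + ε₂ * x.2) * max (Real.exp x.1 - Real.exp x.2 - 1) 0| ≤ C) ∧
      Tendsto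
        (fun x : ℝ × ℝ =>
          Real.exp (ε₁ * x.1 + ε₂ * x.2) * max (Real.exp x.1 - Real.exp x.2 - 1) 0)
        (cocompact (ℝ × ℝ)) (nhds 0) := by
  have hδ : 0 < min (-(ε₁ + ε₂ + 1)) ε₂ := lt_min (by linarith) hε₂
  exact bounded_and_tendsto_zero_of_abs_le_exp_neg_mul_norm hδ
    (abs_exp_mul_spread_payoff_le_exp_neg_mul_norm hδ.le (min_le_left _ _) (min_le_right _ _))
end
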